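/- arXiv:1910.05987 — 5 statements merged into one kernel-verified Lean document; each statement's English description precedes it below -/
import Mathlib

section
/- Let A^1, …, A^n ∈ GL_d(ℚ_p) be invertible diagonal matrices. Suppose that for every ε ∈ {0,1}^d we have Σ_{r=1}^n δ((A^r)_v, I_v) ≤ Σ_{r=1}^n δ((A^r)_v, (diag(p^{ε_1},…,p^{ε_d}))_v), where I is the identity matrix. Then for every invertible diagonal matrix D ∈ GL_d(ℚ_p): Σ_{r=1}^n δ((A^r)_v, I_v) ≤ Σ_{r=1}^n δ((A^r)_v, D_v); i.e., any local minimum on an apartment of the total distance function to the (A^r)_v is a global minimum on that apartment. -/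
open Pointwise

namespace BT

variable (p : ℕ) [Fact p.Prime] (d : ℕ)

/-- A `ℤ_[p]`-lattice in `ℚ_[p]^d`: a finitely generated `ℤ_[p]`-submodule that
spans `ℚ_[p]^d` over `ℚ_[p]`. -/
def IsLattice (L : Submodule ℤ_[p] (Fin d → ℚ_[p])) : Prop :=
  L.FG ∧ Submodule.span ℚ_[p] (L : Set (Fin d → ℚ_[p])) = ⊤

/-- Two submodules are homothetic if one is a nonzero scalar multiple of the other. -/
def Homothetic (L L' : Submodule ℤ_[p] (Fin d → ℚ_[p])) : Prop :=
  ∃ c : ℚ_[p], c ≠ 0 ∧ (L' : Set (Fin d → ℚ_[p])) = c • (L : Set (Fin d → ℚ_[p]))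

theorem homothetic_equivalence : Equivalence (Homothetic p d) where
  refl := fun L => ⟨1, one_ne_zero, (one_smul ℚ_[p] (L : Set (Fin d → ℚ_[p]))).symm⟩
  symm := by
    rintro L L' ⟨c, hc, h⟩
    exact ⟨c⁻¹, inv_ne_zero hc, by rw [h, inv_smul_smul₀ hc]⟩
  trans := by
    rintro L L' L'' ⟨c, hc, h⟩ ⟨c', hc', h'⟩
    exact ⟨c' * c, mul_ne_zero hc' hc, by rw [h', h, smul_smul]⟩

def BTSetoid : Setoid (Submodule ℤ_[p] (Fin d → ℚ_[p])) :=
  ⟨Homothetic p d, homothetic_equivalence p d⟩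

/-- Vertices of the Bruhat–Tits building: homothety classes of submodules
(the building proper consists of the classes of lattices). -/
def Vertex := Quotient (BTSetoid p d)

/-- `A_v`: the homothety class of the `ℤ_[p]`-span of the rows of `A`. -/
noncomputable def vertexOf (A : Matrix (Fin d) (Fin d) ℚ_[p]) : Vertex p d :=
  Quotient.mk (BTSetoid p d) (Submodule.span ℤ_[p] (Set.range fun i => A i))

/-- One half of the adjacency relation: there are lattice representatives
`L ⊋ L' ⊋ pL`. -/
def AdjHalf (x y : Vertex p d) : Prop :=
  ∃ L L' : Submodule ℤ_[p] (Fin d → ℚ_[p]),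
    IsLattice p d L ∧ IsLattice p d L' ∧
    x = Quotient.mk (BTSetoid p d) L ∧ y = Quotient.mk (BTSetoid p d) L' ∧
    (L' : Set (Fin d → ℚ_[p])) ⊂ (L : Set (Fin d → ℚ_[p])) ∧
    (p : ℚ_[p]) • (L : Set (Fin d → ℚ_[p])) ⊂ (L' : Set (Fin d → ℚ_[p]))

/-- The 1-skeleton of the Bruhat–Tits building of `SL_d(ℚ_p)` as a simple graph. -/
def Graph : SimpleGraph (Vertex p d) where
  Adj x y := x ≠ y ∧ (AdjHalf p d x y ∨ AdjHalf p d y x)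
  symm := ⟨fun x y h => ⟨h.1.symm, h.2.symm⟩⟩
  loopless := ⟨fun x h => h.1 rfl⟩

/-- An `(A:i, B:d−i)`-candidate: a matrix whose rows are `i` pairwise distinct rows
of `A` and `d − i` pairwise distinct rows of `B`. -/
def IsCandidate (i : ℕ) (A B X : Matrix (Fin d) (Fin d) ℚ_[p]) : Prop :=
  ∃ (S : Finset (Fin d)) (ρ : Fin d → Fin d),
    S.card = i ∧ Set.InjOn ρ ↑S ∧ Set.InjOn ρ ↑Sᶜ ∧
    ∀ j, X j = if j ∈ S then A (ρ j) else B (ρ j)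

/-- `m_{A:i,B:d−i}`: the minimal valuation of the determinant of an
`(A:i, B:d−i)`-candidate with nonzero determinant. -/
noncomputable def mVal (i : ℕ) (A B : Matrix (Fin d) (Fin d) ℚ_[p]) : ℤ :=
  sInf {v : ℤ | ∃ X : Matrix (Fin d) (Fin d) ℚ_[p],
    IsCandidate p d i A B X ∧ X.det ≠ 0 ∧ v = X.det.valuation}

/-- Membership in `GL_d(ℤ_p)` (as a matrix over `ℚ_p`): integral entries and
determinant a unit of `ℤ_p`. -/
def InGLZp (X : Matrix (Fin d) (Fin d) ℚ_[p]) : Prop :=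
  (∀ i j, ‖X i j‖ ≤ 1) ∧ ‖X.det‖ = 1


section Aux
variable (p : ℕ) [hp : Fact p.Prime] (d : ℕ)

noncomputable def La (a : Fin d → ℤ) : Submodule ℤ_[p] (Fin d → ℚ_[p]) where
  carrier := {x | ∀ i, ‖x i‖ ≤ (p : ℝ) ^ (-(a i))}
  add_mem' {x y} hx hy i := le_trans (Padic.nonarchimedean _ _) (max_le (hx i) (hy i))
  zero_mem' i := by simp only [Pi.zero_apply, norm_zero]; positivity
  smul_mem' c x hx := by
    intro i
    have h : (c • x) i = (c : ℚ_[p]) * x i := by simp [Pi.smul_apply, Algebra.smul_def]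
    rw [h, norm_mul]
    calc ‖(c : ℚ_[p])‖ * ‖x i‖ ≤ 1 * ((p:ℝ) ^ (-(a i))) :=
          mul_le_mul (PadicInt.norm_le_one c) (hx i) (norm_nonneg _) zero_le_one
      _ = _ := one_mul _

lemma mem_La {a : Fin d → ℤ} {x : Fin d → ℚ_[p]} :
    x ∈ La p d a ↔ ∀ i, ‖x i‖ ≤ (p : ℝ) ^ (-(a i)) := Iff.rfl

lemma one_lt_pR : (1:ℝ) < (p:ℝ) := by exact_mod_cast hp.out.one_lt
lemma ppow_le_ppow {m n : ℤ} : (p:ℝ) ^ m ≤ (p:ℝ) ^ n ↔ m ≤ n :=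
  zpow_le_zpow_iff_right₀ (one_lt_pR p)
lemma ppow_pos (m : ℤ) : (0:ℝ) < (p:ℝ) ^ m :=
  zpow_pos (lt_trans one_pos (one_lt_pR p)) m

lemma norm_single {q : ℚ_[p]} {i j : Fin d} :
    ‖Pi.single (M := fun _ : Fin d => ℚ_[p]) i q j‖ = if j = i then ‖q‖ else 0 := by
  rcases eq_or_ne j i with rfl | h
  · simp
  · simp [Pi.single_eq_of_ne h, h]

lemma single_mem_La {a : Fin d → ℤ} {i : Fin d} {q : ℚ_[p]} (hq : ‖q‖ ≤ (p:ℝ) ^ (-(a i))) :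
    Pi.single i q ∈ La p d a := by
  intro j
  rw [norm_single]
  rcases eq_or_ne j i with rfl | h
  · rw [if_pos rfl]; exact hq
  · rw [if_neg h]; exact le_of_lt (ppow_pos p _)

lemma La_le_La {a b : Fin d → ℤ} : La p d a ≤ La p d b ↔ ∀ i, b i ≤ a i := by
  constructor
  · intro h i
    have hm : Pi.single i ((p:ℚ_[p]) ^ (a i)) ∈ La p d a :=
      single_mem_La p d (by rw [Padic.norm_p_zpow])
    have h2 := h hm i
    rw [Pi.single_eq_same, Padic.norm_p_zpow, ppow_le_ppow] at h2
    exact neg_le_neg_iff.mp h2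
  · intro h x hx i
    exact le_trans (hx i) ((ppow_le_ppow p).mpr (neg_le_neg (h i)))

lemma La_inj {a b : Fin d → ℤ} (h : La p d a = La p d b) : a = b := by
  funext i
  have h1 := (La_le_La p d).mp h.le i
  have h2 := (La_le_La p d).mp h.ge i
  omega

lemma smul_La_set (c : ℚ_[p]) (hc : c ≠ 0) (a : Fin d → ℤ) :
    c • (La p d a : Set (Fin d → ℚ_[p])) = (La p d (fun i => a i + c.valuation) : Set _) := by
  have hcpos : (0:ℝ) < ‖c‖ := norm_pos_iff.mpr hc
  have hnc : ‖c‖ = (p:ℝ) ^ (-c.valuation) := Padic.norm_eq_zpow_neg_valuation hc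
  ext y
  rw [Set.mem_smul_set_iff_inv_smul_mem₀ hc]
  have key : ∀ i : Fin d, ‖(c⁻¹ • y) i‖ = ‖c‖⁻¹ * ‖y i‖ := by
    intro i; rw [Pi.smul_apply, smul_eq_mul, norm_mul, norm_inv]
  have hmul : ∀ i : Fin d, ‖c‖ * (p:ℝ) ^ (-(a i)) = (p:ℝ) ^ (-(a i + c.valuation)) := by
    intro i
    rw [hnc, ← zpow_add₀ (ne_of_gt (lt_trans one_pos (one_lt_pR p)))]
    ring_nf
  constructor
  · intro h i
    have h2 := h i
    rw [key i, inv_mul_le_iff₀ hcpos, hmul i] at h2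
    exact h2
  · intro h i
    rw [key i, inv_mul_le_iff₀ hcpos, hmul i]
    exact h i

lemma val_p_zpow (m : ℤ) : ((p:ℚ_[p]) ^ m).valuation = m := by
  have hne : ((p:ℚ_[p]) ^ m) ≠ 0 := zpow_ne_zero _ (Nat.cast_ne_zero.mpr hp.out.ne_zero)
  have h1 : (p:ℝ) ^ (-((p:ℚ_[p]) ^ m).valuation) = (p:ℝ) ^ (-m) := by
    rw [← Padic.norm_eq_zpow_neg_valuation hne, Padic.norm_p_zpow]
  have := zpow_right_injective₀ (lt_trans one_pos (one_lt_pR p)) (ne_of_gt (one_lt_pR p)) h1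
  omega

lemma span_rows_diag (D : Matrix (Fin d) (Fin d) ℚ_[p]) (hD : D.IsDiag)
    (h0 : ∀ i, D i i ≠ 0) :
    Submodule.span ℤ_[p] (Set.range fun i => D i) = La p d (fun i => (D i i).valuation) := by
  apply le_antisymm
  · rw [Submodule.span_le]
    rintro _ ⟨i, rfl⟩
    intro j
    show ‖D i j‖ ≤ _
    rcases eq_or_ne i j with rfl | hij
    · rw [Padic.norm_eq_zpow_neg_valuation (h0 i)]
    · rw [hD hij, norm_zero]
      exact le_of_lt (ppow_pos p _)
  · intro x hx
    rw [← Finset.univ_sum_single x]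
    apply Submodule.sum_mem
    intro i _
    have hz : ‖x i / D i i‖ ≤ 1 := by
      rw [norm_div, div_le_one (norm_pos_iff.mpr (h0 i)), Padic.norm_eq_zpow_neg_valuation (h0 i)]
      exact hx i
    set z : ℤ_[p] := (⟨x i / D i i, hz⟩ : ℤ_[p]) with hzdef
    have heq : Pi.single i (x i) = z • (D i : Fin d → ℚ_[p]) := by
      funext j
      have h3 : (z • (D i : Fin d → ℚ_[p])) j = (x i / D i i) * D i j := by
        rw [Pi.smul_apply, Algebra.smul_def]; rfl
      rw [h3]
      rcases eq_or_ne i j with rfl | hij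
      · rw [Pi.single_eq_same, div_mul_cancel₀ _ (h0 i)]
      · rw [hD hij, mul_zero, Pi.single_eq_of_ne (Ne.symm hij)]
    rw [heq]
    exact Submodule.smul_mem _ _ (Submodule.subset_span ⟨i, rfl⟩)


lemma La_ne_zero_c : ((p:ℚ_[p]) : ℚ_[p]) ≠ 0 := Nat.cast_ne_zero.mpr hp.out.ne_zero

lemma mk_La_eq_iff {a b : Fin d → ℤ} :
    Quotient.mk (BTSetoid p d) (La p d a) = Quotient.mk (BTSetoid p d) (La p d b) ↔
      ∃ m : ℤ, b = fun i => a i + m := by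
  rw [Quotient.eq]
  constructor
  · rintro ⟨c, hc, hset⟩
    refine ⟨c.valuation, ?_⟩
    have : (La p d b : Set (Fin d → ℚ_[p])) = ((La p d (fun i => a i + c.valuation) : Submodule ℤ_[p] (Fin d → ℚ_[p])) : Set (Fin d → ℚ_[p])) := by
      rw [hset, smul_La_set p d c hc]
    exact La_inj p d (SetLike.coe_injective this)
  · rintro ⟨m, rfl⟩
    refine ⟨(p:ℚ_[p]) ^ m, zpow_ne_zero _ (La_ne_zero_c p), ?_⟩
    rw [smul_La_set p d _ (zpow_ne_zero _ (La_ne_zero_c p)), val_p_zpow]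

lemma isLattice_La (a : Fin d → ℤ) : IsLattice p d (La p d a) := by
  constructor
  · have h := span_rows_diag p d (Matrix.diagonal fun i => (p:ℚ_[p]) ^ (a i))
      (Matrix.isDiag_diagonal _) (by
        intro i; rw [Matrix.diagonal_apply_eq]; exact zpow_ne_zero _ (La_ne_zero_c p))
    have h2 : (fun i => ((Matrix.diagonal fun i => (p:ℚ_[p]) ^ (a i)) i i).valuation) = a := by
      funext i; rw [Matrix.diagonal_apply_eq, val_p_zpow]
    rw [h2] at h
    rw [← h]
    exact Submodule.fg_span (Set.finite_range _)
  · rw [eq_top_iff]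
    intro x _
    rw [← Finset.univ_sum_single x]
    apply Submodule.sum_mem
    intro i _
    have hmem : Pi.single (M := fun _ : Fin d => ℚ_[p]) i ((p:ℚ_[p]) ^ (a i)) ∈
        (La p d a : Set (Fin d → ℚ_[p])) := single_mem_La p d (by rw [Padic.norm_p_zpow])
    have heq : Pi.single (M := fun _ : Fin d => ℚ_[p]) i (x i)
        = (x i * ((p:ℚ_[p]) ^ (-(a i)))) • Pi.single (M := fun _ : Fin d => ℚ_[p]) i ((p:ℚ_[p]) ^ (a i)) := by
      rw [← Pi.single_smul]
      congr 1
      rw [smul_eq_mul, mul_assoc, ← zpow_add₀ (La_ne_zero_c p)]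
      simp
    rw [heq]
    exact Submodule.smul_mem _ _ (Submodule.subset_span hmem)

lemma vertexOf_eq_mk_La (D : Matrix (Fin d) (Fin d) ℚ_[p]) (hD : D.IsDiag)
    (h0 : ∀ i, D i i ≠ 0) :
    vertexOf p d D = Quotient.mk (BTSetoid p d) (La p d fun i => (D i i).valuation) := by
  unfold vertexOf
  rw [span_rows_diag p d D hD h0]

lemma La_set_ssubset {a b : Fin d → ℤ} (h : ∀ i, a i ≤ b i) (hne : ∃ i, a i ≠ b i) :
    (La p d b : Set (Fin d → ℚ_[p])) ⊂ (La p d a : Set (Fin d → ℚ_[p])) := by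
  rw [SetLike.coe_ssubset_coe]
  rw [lt_iff_le_and_ne]
  refine ⟨(La_le_La p d).mpr h, ?_⟩
  intro hcon
  obtain ⟨i, hi⟩ := hne
  exact hi ((congrFun (La_inj p d hcon) i).symm ▸ rfl)

lemma adj_La {a b : Fin d → ℤ} (h1 : ∀ i, a i ≤ b i) (h2 : ∀ i, b i ≤ a i + 1)
    (h3 : ∃ i, b i = a i + 1) (h4 : ∃ i, b i = a i) :
    (Graph p d).Adj (Quotient.mk (BTSetoid p d) (La p d a))
      (Quotient.mk (BTSetoid p d) (La p d b)) := by
  constructor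
  · intro h
    obtain ⟨m, hm⟩ := (mk_La_eq_iff p d).mp h
    obtain ⟨i, hi⟩ := h3
    obtain ⟨j, hj⟩ := h4
    have e1 := congrFun hm i
    have e2 := congrFun hm j
    omega
  · left
    refine ⟨La p d a, La p d b, isLattice_La p d a, isLattice_La p d b, rfl, rfl, ?_, ?_⟩
    · exact La_set_ssubset p d h1 (by obtain ⟨i, hi⟩ := h3; exact ⟨i, by omega⟩)
    · have hps : (p:ℚ_[p]) • (La p d a : Set (Fin d → ℚ_[p]))
          = (La p d (fun i => a i + 1) : Submodule ℤ_[p] (Fin d → ℚ_[p])) := by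
        rw [smul_La_set p d _ (La_ne_zero_c p) a, Padic.valuation_p]
      rw [hps]
      exact La_set_ssubset p d h2 (by obtain ⟨j, hj⟩ := h4; exact ⟨j, by omega⟩)

lemma exists_walk_le (k : ℕ) (a c : Fin d → ℤ)
    (hk : ∀ i j, (c i - a i) - (c j - a j) ≤ (k:ℤ)) :
    ∃ w : (Graph p d).Walk (Quotient.mk (BTSetoid p d) (La p d a))
      (Quotient.mk (BTSetoid p d) (La p d c)), w.length ≤ k := by
  induction k generalizing a c with
  | zero =>
    rcases isEmpty_or_nonempty (Fin d) with hE | hNE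
    · have : a = c := funext fun i => absurd (Nonempty.intro i) (by simpa using hE)
      subst this
      exact ⟨SimpleGraph.Walk.nil, le_refl _⟩
    · obtain ⟨i0⟩ := hNE
      have heq : Quotient.mk (BTSetoid p d) (La p d a)
          = Quotient.mk (BTSetoid p d) (La p d c) := by
        rw [mk_La_eq_iff]
        refine ⟨c i0 - a i0, funext fun i => ?_⟩
        have h1 := hk i i0
        have h2 := hk i0 i
        omega
      exact ⟨(SimpleGraph.Walk.nil).copy rfl heq, (SimpleGraph.Walk.length_copy _ _ _).le⟩
  | succ k ih =>
    rcases isEmpty_or_nonempty (Fin d) with hE | hNE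
    · have : a = c := funext fun i => absurd (Nonempty.intro i) (by simpa using hE)
      subst this
      exact ⟨SimpleGraph.Walk.nil, Nat.zero_le _⟩
    · by_cases hconst : ∀ i j : Fin d, c i - a i = c j - a j
      · obtain ⟨i0⟩ := hNE
        have heq : Quotient.mk (BTSetoid p d) (La p d a)
            = Quotient.mk (BTSetoid p d) (La p d c) := by
          rw [mk_La_eq_iff]
          exact ⟨c i0 - a i0, funext fun i => by have := hconst i i0; omega⟩
        exact ⟨(SimpleGraph.Walk.nil).copy rfl heq, le_trans (SimpleGraph.Walk.length_copy _ _ _).le (Nat.zero_le _)⟩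
      · push_neg at hconst
        obtain ⟨i1, j1, hne⟩ := hconst
        -- μ : the minimum of c - a
        obtain ⟨jm, _, hjm⟩ := Finset.exists_mem_eq_inf' (Finset.univ_nonempty (α := Fin d))
          (fun i => c i - a i)
        set μ := Finset.univ.inf' (Finset.univ_nonempty (α := Fin d)) (fun i => c i - a i)
          with hμdef
        have hμle : ∀ i, μ ≤ c i - a i := fun i =>
          Finset.inf'_le _ (Finset.mem_univ i)
        set b : Fin d → ℤ := fun i => min (c i) (a i + μ + 1) with hbdef
        -- adjacency from a (shifted by μ) to b
        have hadj : (Graph p d).Adj (Quotient.mk (BTSetoid p d) (La p d a))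
            (Quotient.mk (BTSetoid p d) (La p d b)) := by
          have heq : Quotient.mk (BTSetoid p d) (La p d a)
              = Quotient.mk (BTSetoid p d) (La p d (fun i => a i + μ)) := by
            rw [mk_La_eq_iff]; exact ⟨μ, rfl⟩
          rw [heq]
          apply adj_La
          · intro i; have := hμle i; simp only [hbdef]; omega
          · intro i; simp only [hbdef]; omega
          · have : ∃ i, μ + 1 ≤ c i - a i := by
              by_contra hcon
              push_neg at hcon
              have e1 := hμle i1
              have e2 := hμle j1
              have e3 := hcon i1
              have e4 := hcon j1
              omega
            obtain ⟨i, hi⟩ := this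
            exact ⟨i, by simp only [hbdef]; omega⟩
          · exact ⟨jm, by simp only [hbdef]; omega⟩
        have hrec : ∀ i j : Fin d, (c i - b i) - (c j - b j) ≤ (k:ℤ) := by
          intro i j
          have h1 := hk i jm
          have h2 := hμle i
          have h3 := hμle j
          simp only [hbdef]
          rw [← hjm] at h1
          omega
        obtain ⟨w, hw⟩ := ih b c hrec
        exact ⟨SimpleGraph.Walk.cons hadj w, (SimpleGraph.Walk.length_cons hadj w).le.trans (Nat.succ_le_succ hw)⟩

lemma dist_La_le (k : ℕ) (a c : Fin d → ℤ)
    (hk : ∀ i j, (c i - a i) - (c j - a j) ≤ (k:ℤ)) :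
    (Graph p d).dist (Quotient.mk (BTSetoid p d) (La p d a))
      (Quotient.mk (BTSetoid p d) (La p d c)) ≤ k := by
  obtain ⟨w, hw⟩ := exists_walk_le p d k a c hk
  exact le_trans (SimpleGraph.dist_le w) hw

lemma reachable_La (a c : Fin d → ℤ) :
    (Graph p d).Reachable (Quotient.mk (BTSetoid p d) (La p d a))
      (Quotient.mk (BTSetoid p d) (La p d c)) := by
  classical
  rcases isEmpty_or_nonempty (Fin d) with hE | hNE
  · have : a = c := funext fun i => absurd (Nonempty.intro i) (by simpa using hE)
    subst this; exact SimpleGraph.Reachable.refl _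
  · obtain ⟨k, hk⟩ : ∃ k : ℕ, ∀ i j, (c i - a i) - (c j - a j) ≤ (k:ℤ) := by
      obtain ⟨iM, _, hiM⟩ := Finset.exists_mem_eq_sup' (Finset.univ_nonempty (α := Fin d))
        (fun i => c i - a i)
      obtain ⟨jm, _, hjm⟩ := Finset.exists_mem_eq_inf' (Finset.univ_nonempty (α := Fin d))
        (fun i => c i - a i)
      refine ⟨((c iM - a iM) - (c jm - a jm)).toNat, fun i j => ?_⟩
      have h1 : c i - a i ≤ Finset.univ.sup' (Finset.univ_nonempty (α := Fin d))
          (fun i => c i - a i) := by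
        exact Finset.le_sup' (fun i => c i - a i) (Finset.mem_univ i)
      have h2 : Finset.univ.inf' (Finset.univ_nonempty (α := Fin d))
          (fun i => c i - a i) ≤ c j - a j := by
        exact Finset.inf'_le (fun i => c i - a i) (Finset.mem_univ j)
      rw [hiM] at h1
      rw [hjm] at h2
      omega
    obtain ⟨w, _⟩ := exists_walk_le p d k a c hk
    exact ⟨w⟩

lemma walk_sandwich {x y : Vertex p d} (w : (Graph p d).Walk x y) :
    ∀ (L : Submodule ℤ_[p] (Fin d → ℚ_[p])), x = Quotient.mk (BTSetoid p d) L →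
    ∃ (N : Submodule ℤ_[p] (Fin d → ℚ_[p])) (e : ℚ_[p]), e ≠ 0 ∧
      y = Quotient.mk (BTSetoid p d) N ∧
      (L : Set (Fin d → ℚ_[p])) ⊆ e • (N : Set (Fin d → ℚ_[p])) ∧
      ((p:ℚ_[p]) ^ w.length) • (e • (N : Set (Fin d → ℚ_[p]))) ⊆ (L : Set (Fin d → ℚ_[p])) := by
  induction w with
  | nil =>
    intro L hx
    exact ⟨L, 1, one_ne_zero, hx, by simp, by simp⟩
  | @cons u v z h w ih =>
    intro L hx
    rcases h.2 with hH | hH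
    · obtain ⟨K, K', _, _, hu, hv, hsub, hpsub⟩ := hH
      obtain ⟨ee, hee, hKset⟩ : Homothetic p d L K := Quotient.exact (hx.symm.trans hu)
      obtain ⟨N, e, he, hy, h1, h2⟩ := ih K' hv
      have hLK : (L : Set (Fin d → ℚ_[p])) = ee⁻¹ • (K : Set (Fin d → ℚ_[p])) := by
        rw [hKset, inv_smul_smul₀ hee]
      have hp0 : (p:ℚ_[p]) ≠ 0 := La_ne_zero_c p
      refine ⟨N, ee⁻¹ * ((p:ℚ_[p])⁻¹ * e),
        mul_ne_zero (inv_ne_zero hee) (mul_ne_zero (inv_ne_zero hp0) he), hy, ?_, ?_⟩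
      · have hKsub : (K : Set (Fin d → ℚ_[p])) ⊆ (p:ℚ_[p])⁻¹ • (e • (N : Set (Fin d → ℚ_[p]))) := by
          rw [← Set.smul_set_subset_iff₀ (La_ne_zero_c p)]
          exact subset_trans hpsub.subset h1
        calc (L : Set (Fin d → ℚ_[p])) = ee⁻¹ • (K : Set (Fin d → ℚ_[p])) := hLK
          _ ⊆ ee⁻¹ • ((p:ℚ_[p])⁻¹ • (e • (N : Set (Fin d → ℚ_[p])))) := Set.smul_set_mono hKsub
          _ = (ee⁻¹ * ((p:ℚ_[p])⁻¹ * e)) • (N : Set (Fin d → ℚ_[p])) := by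
            rw [smul_smul, smul_smul, mul_assoc]
      · calc ((p:ℚ_[p]) ^ (SimpleGraph.Walk.cons h w).length)
              • ((ee⁻¹ * ((p:ℚ_[p])⁻¹ * e)) • (N : Set (Fin d → ℚ_[p])))
            = ee⁻¹ • (((p:ℚ_[p]) ^ w.length) • (e • (N : Set (Fin d → ℚ_[p])))) := by
              rw [smul_smul, smul_smul, smul_smul]
              congr 1
              rw [SimpleGraph.Walk.length_cons, pow_succ]
              field_simp
          _ ⊆ ee⁻¹ • (K' : Set (Fin d → ℚ_[p])) := Set.smul_set_mono h2
          _ ⊆ ee⁻¹ • (K : Set (Fin d → ℚ_[p])) := Set.smul_set_mono hsub.subset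
          _ = (L : Set (Fin d → ℚ_[p])) := hLK.symm
    · obtain ⟨K, K', _, _, hv, hu, hsub, hpsub⟩ := hH
      obtain ⟨ee, hee, hKset⟩ : Homothetic p d L K' := Quotient.exact (hx.symm.trans hu)
      obtain ⟨N, e, he, hy, h1, h2⟩ := ih K hv
      have hLK : (L : Set (Fin d → ℚ_[p])) = ee⁻¹ • (K' : Set (Fin d → ℚ_[p])) := by
        rw [hKset, inv_smul_smul₀ hee]
      refine ⟨N, ee⁻¹ * e, mul_ne_zero (inv_ne_zero hee) he, hy, ?_, ?_⟩
      · calc (L : Set (Fin d → ℚ_[p])) = ee⁻¹ • (K' : Set (Fin d → ℚ_[p])) := hLK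
          _ ⊆ ee⁻¹ • (K : Set (Fin d → ℚ_[p])) := Set.smul_set_mono hsub.subset
          _ ⊆ ee⁻¹ • (e • (N : Set (Fin d → ℚ_[p]))) := Set.smul_set_mono h1
          _ = (ee⁻¹ * e) • (N : Set (Fin d → ℚ_[p])) := by rw [smul_smul]
      · calc ((p:ℚ_[p]) ^ (SimpleGraph.Walk.cons h w).length)
              • ((ee⁻¹ * e) • (N : Set (Fin d → ℚ_[p])))
            = ee⁻¹ • ((p:ℚ_[p]) • (((p:ℚ_[p]) ^ w.length) • (e • (N : Set (Fin d → ℚ_[p]))))) := by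
              rw [smul_smul, smul_smul, smul_smul, smul_smul]
              congr 1
              rw [SimpleGraph.Walk.length_cons, pow_succ]
              ring
          _ ⊆ ee⁻¹ • ((p:ℚ_[p]) • (K : Set (Fin d → ℚ_[p]))) :=
              Set.smul_set_mono (Set.smul_set_mono h2)
          _ ⊆ ee⁻¹ • (K' : Set (Fin d → ℚ_[p])) := Set.smul_set_mono hpsub.subset
          _ = (L : Set (Fin d → ℚ_[p])) := hLK.symm

lemma le_dist_La (a c : Fin d → ℤ) (i j : Fin d) :
    (c i - a i) - (c j - a j) ≤
      ((Graph p d).dist (Quotient.mk (BTSetoid p d) (La p d a))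
        (Quotient.mk (BTSetoid p d) (La p d c)) : ℤ) := by
  obtain ⟨w, hw⟩ := (reachable_La p d a c).exists_walk_length_eq_dist
  obtain ⟨N, e, he, hy, h1, h2⟩ := walk_sandwich p d w (La p d a) rfl
  obtain ⟨f, hf, hNset⟩ : Homothetic p d (La p d c) N := Quotient.exact hy
  have hef : e ≠ 0 ∧ f ≠ 0 := ⟨he, hf⟩
  have hEN : e • (N : Set (Fin d → ℚ_[p]))
      = ((La p d (fun i => c i + (e * f).valuation) : Submodule ℤ_[p] (Fin d → ℚ_[p]))
        : Set (Fin d → ℚ_[p])) := by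
    rw [hNset, smul_smul, smul_La_set p d _ (mul_ne_zero he hf)]
  set m := (e * f).valuation with hm
  rw [hEN] at h1 h2
  have hin1 : ∀ i', c i' + m ≤ a i' := by
    intro i'
    exact (La_le_La p d).mp (SetLike.coe_subset_coe.mp h1) i'
  have hin2 : ∀ i', a i' ≤ c i' + m + w.length := by
    intro i'
    have hps : ((p:ℚ_[p]) ^ w.length) • ((La p d (fun i => c i + m)
        : Submodule ℤ_[p] (Fin d → ℚ_[p])) : Set (Fin d → ℚ_[p]))
        = ((La p d (fun i => c i + m + w.length) : Submodule ℤ_[p] (Fin d → ℚ_[p]))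
          : Set (Fin d → ℚ_[p])) := by
      have : ((p:ℚ_[p]) ^ w.length) = (p:ℚ_[p]) ^ (w.length : ℤ) := by
        rw [zpow_natCast]
      rw [this, smul_La_set p d _ (zpow_ne_zero _ (La_ne_zero_c p)), val_p_zpow]
    rw [hps] at h2
    have := (La_le_La p d).mp (SetLike.coe_subset_coe.mp h2) i'
    omega
  have e1 := hin1 i
  have e2 := hin2 i
  have e3 := hin1 j
  have e4 := hin2 j
  rw [hw] at e2 e4
  omega

noncomputable def spr [Nonempty (Fin d)] (v : Fin d → ℤ) : ℤ :=
  Finset.univ.sup' Finset.univ_nonempty v - Finset.univ.inf' Finset.univ_nonempty v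

variable [Nonempty (Fin d)]

lemma le_sup_v (v : Fin d → ℤ) (i : Fin d) :
    v i ≤ Finset.univ.sup' Finset.univ_nonempty v := Finset.le_sup' v (Finset.mem_univ i)

lemma inf_le_v (v : Fin d → ℤ) (i : Fin d) :
    Finset.univ.inf' Finset.univ_nonempty v ≤ v i := Finset.inf'_le v (Finset.mem_univ i)

lemma sup_attained (v : Fin d → ℤ) :
    ∃ i, Finset.univ.sup' Finset.univ_nonempty v = v i := by
  obtain ⟨i, _, hi⟩ := Finset.exists_mem_eq_sup' (Finset.univ_nonempty (α := Fin d)) v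
  exact ⟨i, hi⟩

lemma inf_attained (v : Fin d → ℤ) :
    ∃ i, Finset.univ.inf' Finset.univ_nonempty v = v i := by
  obtain ⟨i, _, hi⟩ := Finset.exists_mem_eq_inf' (Finset.univ_nonempty (α := Fin d)) v
  exact ⟨i, hi⟩

lemma le_spr (v : Fin d → ℤ) (i j : Fin d) : v i - v j ≤ spr d v :=
  sub_le_sub (le_sup_v d v i) (inf_le_v d v j)

lemma spr_le {v : Fin d → ℤ} {k : ℤ} (h : ∀ i j, v i - v j ≤ k) : spr d v ≤ k := by
  obtain ⟨i, hi⟩ := sup_attained d v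
  obtain ⟨j, hj⟩ := inf_attained d v
  rw [spr, hi, hj]
  exact h i j

lemma spr_nonneg (v : Fin d → ℤ) : 0 ≤ spr d v := by
  obtain ⟨i⟩ := (inferInstance : Nonempty (Fin d))
  have := le_spr d v i i
  omega

lemma spr_congr {v w : Fin d → ℤ} (h : ∀ i j, v i - v j = w i - w j) : spr d v = spr d w := by
  apply le_antisymm
  · exact spr_le d (fun i j => le_of_eq_of_le (h i j) (le_spr d w i j))
  · exact spr_le d (fun i j => le_of_eq_of_le (h i j).symm (le_spr d v i j))

lemma dist_La_eq (a c : Fin d → ℤ) :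
    (((Graph p d).dist (Quotient.mk (BTSetoid p d) (La p d a))
      (Quotient.mk (BTSetoid p d) (La p d c))) : ℤ) = spr d (fun i => c i - a i) := by
  apply le_antisymm
  · have h := dist_La_le p d (spr d (fun i => c i - a i)).toNat a c ?_
    · have hnn := spr_nonneg d (fun i => c i - a i)
      omega
    · intro i j
      have h2 := le_spr d (fun i => c i - a i) i j
      have hnn := spr_nonneg d (fun i => c i - a i)
      omega
  · exact spr_le d (fun i j => le_dist_La p d a c i j)

lemma mid_ineq (a c mp mm : Fin d → ℤ) (h1 : ∀ i, mp i + mm i = c i)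
    (h2 : ∀ i, c i ≤ 2 * mp i) (h3 : ∀ i, 2 * mp i ≤ c i + 1) :
    spr d (fun i => mp i - a i) + spr d (fun i => mm i - a i) ≤
      spr d (fun i => 0 - a i) + spr d (fun i => c i - a i) := by
  obtain ⟨i1, hi1⟩ := sup_attained d (fun i => mp i - a i)
  obtain ⟨j1, hj1⟩ := inf_attained d (fun i => mp i - a i)
  obtain ⟨i2, hi2⟩ := sup_attained d (fun i => mm i - a i)
  obtain ⟨j2, hj2⟩ := inf_attained d (fun i => mm i - a i)
  have key1 : spr d (fun i => mp i - a i) = (mp i1 - a i1) - (mp j1 - a j1) := by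
    rw [spr, hi1, hj1]
  have key2 : spr d (fun i => mm i - a i) = (mm i2 - a i2) - (mm j2 - a j2) := by
    rw [spr, hi2, hj2]
  -- bounds from the sup/inf of the outer functions
  have b1 : 0 - a i1 ≤ Finset.univ.sup' Finset.univ_nonempty (fun i => 0 - a i) :=
    le_sup_v d _ i1
  have b2 : c i1 - a i1 ≤ Finset.univ.sup' Finset.univ_nonempty (fun i => c i - a i) :=
    le_sup_v d _ i1
  have b3 : 0 - a i2 ≤ Finset.univ.sup' Finset.univ_nonempty (fun i => 0 - a i) :=
    le_sup_v d _ i2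
  have b4 : c i2 - a i2 ≤ Finset.univ.sup' Finset.univ_nonempty (fun i => c i - a i) :=
    le_sup_v d _ i2
  have b5 : Finset.univ.inf' Finset.univ_nonempty (fun i => 0 - a i) ≤ 0 - a j1 :=
    inf_le_v d _ j1
  have b6 : Finset.univ.inf' Finset.univ_nonempty (fun i => c i - a i) ≤ c j1 - a j1 :=
    inf_le_v d _ j1
  have b7 : Finset.univ.inf' Finset.univ_nonempty (fun i => 0 - a i) ≤ 0 - a j2 :=
    inf_le_v d _ j2
  have b8 : Finset.univ.inf' Finset.univ_nonempty (fun i => c i - a i) ≤ c j2 - a j2 :=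
    inf_le_v d _ j2
  have e1 := h1 i1; have e2 := h2 i1; have e3 := h3 i1
  have e4 := h1 i2; have e5 := h2 i2; have e6 := h3 i2
  have e7 := h1 j1; have e8 := h2 j1; have e9 := h3 j1
  have e10 := h1 j2; have e11 := h2 j2; have e12 := h3 j2
  rw [key1, key2]
  unfold spr
  omega

lemma descent_base (n : ℕ) (a : Fin n → Fin d → ℤ)
    (hloc : ∀ ε : Fin d → ℤ, (∀ i, 0 ≤ ε i ∧ ε i ≤ 1) →
      ∑ r : Fin n, spr d (fun i => 0 - a r i) ≤ ∑ r : Fin n, spr d (fun i => ε i - a r i))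
    (c : Fin d → ℤ) (hc : spr d c ≤ 1) :
    ∑ r : Fin n, spr d (fun i => 0 - a r i) ≤ ∑ r : Fin n, spr d (fun i => c i - a r i) := by
  set μ := Finset.univ.inf' Finset.univ_nonempty c with hμ
  set ε : Fin d → ℤ := fun i => c i - μ with hε
  have hεb : ∀ i, 0 ≤ ε i ∧ ε i ≤ 1 := by
    intro i
    have h1 := inf_le_v d c i
    have h2 := le_sup_v d c i
    have h3 : Finset.univ.sup' Finset.univ_nonempty c -
        Finset.univ.inf' Finset.univ_nonempty c ≤ 1 := hc
    constructor <;> simp only [hε] <;> omega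
  have heq : ∀ r : Fin n, spr d (fun i => c i - a r i) = spr d (fun i => ε i - a r i) := by
    intro r
    apply spr_congr
    intro i j
    simp only [hε]
    ring
  calc ∑ r : Fin n, spr d (fun i => 0 - a r i)
      ≤ ∑ r : Fin n, spr d (fun i => ε i - a r i) := hloc ε hεb
    _ = ∑ r : Fin n, spr d (fun i => c i - a r i) := by
        exact Finset.sum_congr rfl (fun r _ => (heq r).symm)

lemma descent (n : ℕ) (a : Fin n → Fin d → ℤ)
    (hloc : ∀ ε : Fin d → ℤ, (∀ i, 0 ≤ ε i ∧ ε i ≤ 1) →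
      ∑ r : Fin n, spr d (fun i => 0 - a r i) ≤ ∑ r : Fin n, spr d (fun i => ε i - a r i))
    (c : Fin d → ℤ) :
    ∑ r : Fin n, spr d (fun i => 0 - a r i) ≤ ∑ r : Fin n, spr d (fun i => c i - a r i) := by
  obtain ⟨k, hk⟩ : ∃ k : ℕ, spr d c ≤ (k:ℤ) := ⟨(spr d c).toNat, Int.self_le_toNat _⟩
  induction k generalizing c with
  | zero => exact descent_base d n a hloc c (by omega)
  | succ k ih =>
    by_cases hsmall : spr d c ≤ 1
    · exact descent_base d n a hloc c hsmall
    · set mm : Fin d → ℤ := fun i => c i / 2 with hmm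
      set mp : Fin d → ℤ := fun i => c i - c i / 2 with hmp
      have h1 : ∀ i, mp i + mm i = c i := fun i => by simp only [hmp, hmm]; omega
      have h2 : ∀ i, c i ≤ 2 * mp i := fun i => by simp only [hmp]; omega
      have h3 : ∀ i, 2 * mp i ≤ c i + 1 := fun i => by simp only [hmp]; omega
      have hsprp : spr d mp ≤ (k:ℤ) := by
        obtain ⟨i, hi⟩ := sup_attained d mp
        obtain ⟨j, hj⟩ := inf_attained d mp
        have hsp : spr d mp = mp i - mp j := by rw [spr, hi, hj]
        have hb := le_spr d c i j
        have e1 := h2 i; have e2 := h3 i; have e3 := h2 j; have e4 := h3 j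
        omega
      have hsprm : spr d mm ≤ (k:ℤ) := by
        obtain ⟨i, hi⟩ := sup_attained d mm
        obtain ⟨j, hj⟩ := inf_attained d mm
        have hsp : spr d mm = mm i - mm j := by rw [spr, hi, hj]
        have hb := le_spr d c i j
        have e1 := h2 i; have e2 := h3 i; have e3 := h2 j; have e4 := h3 j
        have f1 := h1 i; have f2 := h1 j
        omega
      have hmid : ∑ r : Fin n, spr d (fun i => mp i - a r i)
          + ∑ r : Fin n, spr d (fun i => mm i - a r i)
          ≤ ∑ r : Fin n, spr d (fun i => 0 - a r i)
            + ∑ r : Fin n, spr d (fun i => c i - a r i) := by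
        rw [← Finset.sum_add_distrib, ← Finset.sum_add_distrib]
        exact Finset.sum_le_sum (fun r _ => mid_ineq d (a r) c mp mm h1 h2 h3)
      have hp := ih mp hsprp
      have hm := ih mm hsprm
      omega

end Aux

/-- **Local minimum is global minimum (on an apartment).** If the total distance
from the diagonal vertices `(A^r)_v` attains a local minimum at the identity
vertex (i.e. no neighbour `diag(p^{ε₁},…,p^{ε_d})_v` with `ε ∈ {0,1}^d` gives a
smaller total), then the identity vertex is a global minimum among all vertices
`D_v` with `D` invertible diagonal. -/
theorem local_min_is_global_min (hd : 2 ≤ d) (n : ℕ)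
    (A : Fin n → Matrix (Fin d) (Fin d) ℚ_[p])
    (hdiag : ∀ r, (A r).IsDiag) (hA : ∀ r, (A r).det ≠ 0)
    (hloc : ∀ ε : Fin d → ℕ, (∀ i, ε i ≤ 1) →
      ∑ r : Fin n, (Graph p d).dist (vertexOf p d (A r)) (vertexOf p d 1) ≤
        ∑ r : Fin n, (Graph p d).dist (vertexOf p d (A r))
          (vertexOf p d (Matrix.diagonal fun i => (p : ℚ_[p]) ^ ε i)))
    (D : Matrix (Fin d) (Fin d) ℚ_[p]) (hDdiag : D.IsDiag) (hDdet : D.det ≠ 0) :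
    ∑ r : Fin n, (Graph p d).dist (vertexOf p d (A r)) (vertexOf p d 1) ≤
      ∑ r : Fin n, (Graph p d).dist (vertexOf p d (A r)) (vertexOf p d D) := by
  haveI : Nonempty (Fin d) := ⟨⟨0, by omega⟩⟩
  have hAentry : ∀ r i, A r i i ≠ 0 := by
    intro r i
    have hA' := hA r
    rw [← Matrix.IsDiag.diagonal_diag (hdiag r), Matrix.det_diagonal] at hA'
    exact Finset.prod_ne_zero_iff.mp hA' i (Finset.mem_univ i)
  have hDentry : ∀ i, D i i ≠ 0 := by
    intro i
    rw [← Matrix.IsDiag.diagonal_diag hDdiag, Matrix.det_diagonal] at hDdet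
    exact Finset.prod_ne_zero_iff.mp hDdet i (Finset.mem_univ i)
  set a : Fin n → Fin d → ℤ := fun r i => ((A r) i i).valuation with ha
  set c : Fin d → ℤ := fun i => (D i i).valuation with hc
  have hva : ∀ r, vertexOf p d (A r) = Quotient.mk (BTSetoid p d) (La p d (a r)) :=
    fun r => vertexOf_eq_mk_La p d (A r) (hdiag r) (hAentry r)
  have hv1 : vertexOf p d 1 = Quotient.mk (BTSetoid p d) (La p d (fun _ => (0:ℤ))) := by
    have h1 := vertexOf_eq_mk_La p d 1 Matrix.isDiag_one
      (fun i => by rw [Matrix.one_apply_eq]; exact one_ne_zero)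
    rw [h1]
    have hfun : (fun i : Fin d => ((1 : Matrix (Fin d) (Fin d) ℚ_[p]) i i).valuation)
        = (fun _ : Fin d => (0:ℤ)) :=
      funext fun i => by rw [Matrix.one_apply_eq, Padic.valuation_one]
    rw [hfun]
  have hvD : vertexOf p d D = Quotient.mk (BTSetoid p d) (La p d c) :=
    vertexOf_eq_mk_La p d D hDdiag hDentry
  have hgoal : ∀ (e : Fin d → ℤ) (V : Vertex p d),
      V = Quotient.mk (BTSetoid p d) (La p d e) →
      ∀ r : Fin n, (((Graph p d).dist (vertexOf p d (A r)) V) : ℤ)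
        = spr d (fun i => e i - a r i) := by
    intro e V hV r
    rw [hV, hva r, dist_La_eq]
  have hvε : ∀ ε : Fin d → ℤ, (∀ i, 0 ≤ ε i ∧ ε i ≤ 1) →
      vertexOf p d (Matrix.diagonal fun i => (p : ℚ_[p]) ^ (ε i).toNat)
        = Quotient.mk (BTSetoid p d) (La p d ε) := by
    intro ε hε
    have h1 := vertexOf_eq_mk_La p d (Matrix.diagonal fun i => (p : ℚ_[p]) ^ (ε i).toNat)
      (Matrix.isDiag_diagonal _)
      (fun i => by
        rw [Matrix.diagonal_apply_eq]
        exact pow_ne_zero _ (La_ne_zero_c p))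
    rw [h1]
    have hfun : (fun i : Fin d =>
        ((Matrix.diagonal (fun i => (p:ℚ_[p]) ^ (ε i).toNat) : Matrix (Fin d) (Fin d) ℚ_[p]) i i).valuation)
        = ε := by
      funext i
      rw [Matrix.diagonal_apply_eq, ← zpow_natCast, val_p_zpow]
      have := (hε i).1
      omega
    rw [hfun]
  have hloc' : ∀ ε : Fin d → ℤ, (∀ i, 0 ≤ ε i ∧ ε i ≤ 1) →
      ∑ r : Fin n, spr d (fun i => 0 - a r i) ≤ ∑ r : Fin n, spr d (fun i => ε i - a r i) := by
    intro ε hε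
    have hnat := hloc (fun i => (ε i).toNat) (fun i => by show (ε i).toNat ≤ 1; have h1 := (hε i).1; have h2 := (hε i).2; omega)
    have hcast : ((∑ r : Fin n, (Graph p d).dist (vertexOf p d (A r)) (vertexOf p d 1)) : ℤ)
        ≤ ((∑ r : Fin n, (Graph p d).dist (vertexOf p d (A r))
            (vertexOf p d (Matrix.diagonal fun i => (p : ℚ_[p]) ^ (ε i).toNat))) : ℤ) := by
      exact_mod_cast hnat
    push_cast at hcast
    calc ∑ r : Fin n, spr d (fun i => 0 - a r i)
        = ∑ r : Fin n, (((Graph p d).dist (vertexOf p d (A r)) (vertexOf p d 1)) : ℤ) :=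
          Finset.sum_congr rfl (fun r _ => (hgoal (fun _ => 0) _ hv1 r).symm)
      _ ≤ _ := hcast
      _ = ∑ r : Fin n, spr d (fun i => ε i - a r i) :=
          Finset.sum_congr rfl (fun r _ => hgoal ε _ (hvε ε hε) r)
  have key := descent d n a hloc' c
  have hL : ((∑ r : Fin n, (Graph p d).dist (vertexOf p d (A r)) (vertexOf p d 1)) : ℤ)
      = ∑ r : Fin n, spr d (fun i => 0 - a r i) := by
    push_cast
    exact Finset.sum_congr rfl (fun r _ => hgoal (fun _ => 0) _ hv1 r)
  have hR : ((∑ r : Fin n, (Graph p d).dist (vertexOf p d (A r)) (vertexOf p d D)) : ℤ)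
      = ∑ r : Fin n, spr d (fun i => c i - a r i) := by
    push_cast
    exact Finset.sum_congr rfl (fun r _ => hgoal c _ hvD r)
  have : ((∑ r : Fin n, (Graph p d).dist (vertexOf p d (A r)) (vertexOf p d 1)) : ℤ)
      ≤ ((∑ r : Fin n, (Graph p d).dist (vertexOf p d (A r)) (vertexOf p d D)) : ℤ) := by
    rw [hL, hR]; exact key
  exact_mod_cast this


end BT
end

section
/- For all A, B ∈ GL_d(ℚ_p), every integer 0 ≤ k ≤ d, and every X ∈ GL_d(ℤ_p): m_{(XA):k, B:d−k} = m_{A:k, B:d−k} and m_{A:k, (XB):d−k} = m_{A:k, B:d−k}; that is, m_{A:k,B:d−k} is invariant under left multiplication of A or of B by matrices in GL_d(ℤ_p). -/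
open Pointwise

namespace BT

variable (p : ℕ) [Fact p.Prime] (d : ℕ)

/-- The set of valuations of determinants of candidates. -/
def candSet (i : ℕ) (A B : Matrix (Fin d) (Fin d) ℚ_[p]) : Set ℤ :=
  {v : ℤ | ∃ X : Matrix (Fin d) (Fin d) ℚ_[p],
    IsCandidate p d i A B X ∧ X.det ≠ 0 ∧ v = X.det.valuation}

lemma mVal_eq_sInf (i : ℕ) (A B : Matrix (Fin d) (Fin d) ℚ_[p]) :
    mVal p d i A B = sInf (candSet p d i A B) := rfl

lemma norm_det_le_one (M : Matrix (Fin d) (Fin d) ℚ_[p]) (h : ∀ i j, ‖M i j‖ ≤ 1) :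
    ‖M.det‖ ≤ 1 := by
  rw [Matrix.det_apply']
  refine IsUltrametricDist.norm_sum_le_of_forall_le_of_nonneg zero_le_one fun σ _ => ?_
  rw [norm_mul]
  have h1 : ‖(Equiv.Perm.sign σ : ℚ_[p])‖ ≤ 1 := by
    rcases Int.units_eq_one_or (Equiv.Perm.sign σ) with hs | hs <;> simp [hs]
  have h2 : ‖∏ i, M (σ i) i‖ ≤ 1 := by
    rw [norm_prod]
    exact Finset.prod_le_one (fun i _ => norm_nonneg _) (fun i _ => h _ _)
  calc ‖(Equiv.Perm.sign σ : ℚ_[p])‖ * ‖∏ i, M (σ i) i‖ ≤ 1 * 1 :=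
        mul_le_mul h1 h2 (norm_nonneg _) zero_le_one
    _ = 1 := mul_one 1

lemma valuation_le_of_norm_le {x y : ℚ_[p]} (hx : x ≠ 0) (hy : y ≠ 0) (h : ‖x‖ ≤ ‖y‖) :
    y.valuation ≤ x.valuation := by
  rw [Padic.norm_eq_zpow_neg_valuation hx, Padic.norm_eq_zpow_neg_valuation hy] at h
  have hp : (1 : ℝ) < p := by exact_mod_cast (Fact.out : p.Prime).one_lt
  have := (zpow_le_zpow_iff_right₀ hp).mp h
  omega

/-- Key lemma: a candidate for `(X*A, B)` with nonzero determinant is dominated by a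
candidate for `(A, B)`, provided the entries of `X` are `p`-adic integers. -/
lemma key (i : ℕ) (A B X Y : Matrix (Fin d) (Fin d) ℚ_[p])
    (hX : ∀ a b, ‖X a b‖ ≤ 1) (hY : IsCandidate p d i (X * A) B Y) (hdet : Y.det ≠ 0) :
    ∃ Z, IsCandidate p d i A B Z ∧ Z.det ≠ 0 ∧ ‖Y.det‖ ≤ ‖Z.det‖ := by
  classical
  obtain ⟨S, ρ, hcard, hinjS, hinjSc, hrows⟩ := hY
  set f := (Matrix.detRowAlternating : (Fin d → ℚ_[p]) [⋀^Fin d]→ₗ[ℚ_[p]] ℚ_[p]) with hf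
  set g : Fin d → Fin d → (Fin d → ℚ_[p]) :=
    fun j l => if j ∈ S then X (ρ j) l • A l else if l = ρ j then B (ρ j) else 0 with hg
  have hYrow : ∀ j, Y j = ∑ l, g j l := by
    intro j
    rw [hrows j]
    by_cases hj : j ∈ S
    · simp only [hg, hj, if_pos]
      funext c
      rw [Matrix.mul_apply, Finset.sum_apply]
      exact Finset.sum_congr rfl fun m _ => rfl
    · simp [hg, hj]
  have hdet_eq : Y.det = ∑ r : Fin d → Fin d, f (fun j => g j (r j)) := by
    have h0 : Y.det = f (fun j => Y j) := rfl
    rw [h0]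
    have h1 : (fun j => Y j) = fun j => ∑ l, g j l := funext hYrow
    rw [h1]
    exact f.toMultilinearMap.map_sum (fun j l => g j l)
  have huniv : (Finset.univ : Finset (Fin d → Fin d)).Nonempty :=
    haveI : Nonempty (Fin d → Fin d) := ⟨ρ⟩
    Finset.univ_nonempty
  obtain ⟨r, -, hr⟩ := IsUltrametricDist.exists_norm_finset_sum_le_of_nonempty huniv
      (fun r : Fin d → Fin d => f (fun j => g j (r j)))
  rw [← hdet_eq] at hr
  -- off S, r must agree with ρ
  have hoff : ∀ j, j ∉ S → r j = ρ j := by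
    intro j hj
    by_contra hne
    have hz : g j (r j) = 0 := by simp [hg, hj, hne]
    have : f (fun j' => g j' (r j')) = 0 :=
      f.toMultilinearMap.map_coord_zero j hz
    rw [this, norm_zero] at hr
    exact hdet (norm_le_zero_iff.mp hr)
  set Z : Matrix (Fin d) (Fin d) ℚ_[p] :=
    (fun j => if j ∈ S then A (r j) else B (ρ j) : Fin d → Fin d → ℚ_[p]) with hZ
  set c : Fin d → ℚ_[p] := fun j => if j ∈ S then X (ρ j) (r j) else 1 with hc
  have hterm : (fun j => g j (r j)) = fun j => c j • (Z j) := by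
    funext j
    by_cases hj : j ∈ S
    · simp [hg, hc, hZ, hj]
    · simp [hg, hc, hZ, hj, hoff j hj]
  have hfact : f (fun j => g j (r j)) = (∏ j, c j) • Z.det := by
    rw [hterm]
    exact f.toMultilinearMap.map_smul_univ c (fun j => Z j)
  have hcnorm : ‖∏ j, c j‖ ≤ 1 := by
    rw [norm_prod]
    refine Finset.prod_le_one (fun j _ => norm_nonneg _) (fun j _ => ?_)
    by_cases hj : j ∈ S <;> simp [hc, hj, hX]
  have hYZ : ‖Y.det‖ ≤ ‖Z.det‖ := by
    calc ‖Y.det‖ ≤ ‖f (fun j => g j (r j))‖ := hr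
      _ = ‖∏ j, c j‖ * ‖Z.det‖ := by rw [hfact, smul_eq_mul, norm_mul]
      _ ≤ 1 * ‖Z.det‖ := mul_le_mul_of_nonneg_right hcnorm (norm_nonneg _)
      _ = ‖Z.det‖ := one_mul _
  have hZdet : Z.det ≠ 0 := by
    intro h0
    rw [h0, norm_zero] at hYZ
    exact hdet (norm_le_zero_iff.mp hYZ)
  refine ⟨Z, ?_, hZdet, hYZ⟩
  refine ⟨S, fun j => if j ∈ S then r j else ρ j, hcard, ?_, ?_, ?_⟩
  · intro j1 h1 j2 h2 heq
    simp only [Finset.mem_coe] at h1 h2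
    simp only [h1, h2, if_pos] at heq
    by_contra hne
    exact hZdet (Matrix.det_zero_of_row_eq hne (show (if j1 ∈ S then A (r j1) else B (ρ j1)) = (if j2 ∈ S then A (r j2) else B (ρ j2)) by simp [h1, h2, heq]))
  · intro j1 h1 j2 h2 heq
    simp only [Finset.coe_compl, Set.mem_compl_iff, Finset.mem_coe] at h1 h2
    simp only [h1, h2, if_neg] at heq
    exact hinjSc (by simpa using h1) (by simpa using h2) heq
  · intro j
    show (if j ∈ S then A (r j) else B (ρ j)) = _
    by_cases hj : j ∈ S <;> simp [hj]

lemma candSet_bddBelow (i : ℕ) (A B : Matrix (Fin d) (Fin d) ℚ_[p]) :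
    BddBelow (candSet p d i A B) := by
  classical
  refine BddBelow.mono ?_ (Set.Finite.bddBelow (Set.finite_range
    (fun Sρ : Finset (Fin d) × (Fin d → Fin d) =>
      (Matrix.of fun j => if j ∈ Sρ.1 then A (Sρ.2 j) else B (Sρ.2 j)).det.valuation)))
  rintro v ⟨X, ⟨S, ρ, -, -, -, hrows⟩, -, rfl⟩
  refine ⟨(S, ρ), ?_⟩
  have hXeq : X = Matrix.of fun j => if j ∈ S then A (ρ j) else B (ρ j) := funext hrows
  show (Matrix.of fun j => if j ∈ S then A (ρ j) else B (ρ j)).det.valuation = X.det.valuation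
  rw [← hXeq]

lemma candSet_flip (i : ℕ) (A B : Matrix (Fin d) (Fin d) ℚ_[p]) (hi : i ≤ d) :
    candSet p d i A B = candSet p d (d - i) B A := by
  classical
  have main : ∀ (m : ℕ) (C D X : Matrix (Fin d) (Fin d) ℚ_[p]),
      IsCandidate p d m C D X → IsCandidate p d (d - m) D C X := by
    rintro m C D X ⟨S, ρ, hcard, h1, h2, hr⟩
    refine ⟨Sᶜ, ρ, by simp [Finset.card_compl, hcard], h2, by rwa [compl_compl], fun j => ?_⟩
    rw [hr j]
    by_cases hj : j ∈ S <;> simp [hj]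
  ext v
  constructor
  · rintro ⟨X, hc, h0, rfl⟩
    exact ⟨X, main i A B X hc, h0, rfl⟩
  · rintro ⟨X, hc, h0, rfl⟩
    have h := main (d - i) B A X hc
    rw [Nat.sub_sub_self hi] at h
    exact ⟨X, h, h0, rfl⟩

lemma sInf_eq_of_dominates {s t : Set ℤ} (hs : BddBelow s) (ht : BddBelow t)
    (h1 : ∀ v ∈ s, ∃ w ∈ t, w ≤ v) (h2 : ∀ v ∈ t, ∃ w ∈ s, w ≤ v) : sInf s = sInf t := by
  rcases s.eq_empty_or_nonempty with rfl | hsne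
  · rcases t.eq_empty_or_nonempty with rfl | htne
    · rfl
    · obtain ⟨v, hv⟩ := htne
      obtain ⟨w, hw, -⟩ := h2 v hv
      exact absurd hw (by simp)
  · have htne : t.Nonempty := by
      obtain ⟨v, hv⟩ := hsne
      obtain ⟨w, hw, -⟩ := h1 v hv
      exact ⟨w, hw⟩
    apply le_antisymm
    · obtain ⟨w, hw, hwle⟩ := h2 (sInf t) (Int.csInf_mem htne ht)
      exact (csInf_le hs hw).trans hwle
    · obtain ⟨w, hw, hwle⟩ := h1 (sInf s) (Int.csInf_mem hsne hs)
      exact (csInf_le ht hw).trans hwle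

lemma inv_entries_le_one (X : Matrix (Fin d) (Fin d) ℚ_[p]) (hX : InGLZp p d X) :
    ∀ a b, ‖X⁻¹ a b‖ ≤ 1 := by
  intro a b
  have hdet : X.det ≠ 0 := by
    intro h
    have h2 := hX.2
    rw [h, norm_zero] at h2
    exact one_ne_zero h2.symm
  rw [Matrix.inv_def, Matrix.smul_apply, smul_eq_mul, norm_mul]
  have h1 : ‖Ring.inverse X.det‖ = 1 := by
    rw [Ring.inverse_eq_inv', norm_inv, hX.2, inv_one]
  rw [h1, one_mul, Matrix.adjugate_apply]
  refine norm_det_le_one p d _ fun i j => ?_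
  rw [Matrix.updateRow_apply]
  split
  · simp only [Pi.single_apply]
    split <;> simp
  · exact hX.1 i j

lemma mVal_left_invariant (i : ℕ) (A B X : Matrix (Fin d) (Fin d) ℚ_[p])
    (hX : InGLZp p d X) : mVal p d i (X * A) B = mVal p d i A B := by
  have hdet : X.det ≠ 0 := by
    intro h
    have h2 := hX.2
    rw [h, norm_zero] at h2
    exact one_ne_zero h2.symm
  have hXA : X⁻¹ * (X * A) = A := by
    rw [← Matrix.mul_assoc, Matrix.nonsing_inv_mul X (isUnit_iff_ne_zero.mpr hdet),
      Matrix.one_mul]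
  rw [mVal_eq_sInf, mVal_eq_sInf]
  refine sInf_eq_of_dominates (candSet_bddBelow p d i (X * A) B) (candSet_bddBelow p d i A B)
    ?_ ?_
  · rintro v ⟨Y, hc, h0, rfl⟩
    obtain ⟨Z, hZc, hZ0, hZle⟩ := key p d i A B X Y hX.1 hc h0
    exact ⟨Z.det.valuation, ⟨Z, hZc, hZ0, rfl⟩, valuation_le_of_norm_le p h0 hZ0 hZle⟩
  · rintro v ⟨Y, hc, h0, rfl⟩
    rw [← hXA] at hc
    obtain ⟨Z, hZc, hZ0, hZle⟩ := key p d i (X * A) B X⁻¹ Y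
      (inv_entries_le_one p d X hX) hc h0
    exact ⟨Z.det.valuation, ⟨Z, hZc, hZ0, rfl⟩, valuation_le_of_norm_le p h0 hZ0 hZle⟩

/-- **Invariance of `m` under `GL_d(ℤ_p)`.** Left multiplication of `A` or of `B`
by a matrix of `GL_d(ℤ_p)` does not change `m_{A:k,B:d−k}`. -/
theorem mVal_invariant_GLZp (hd : 2 ≤ d) (A B X : Matrix (Fin d) (Fin d) ℚ_[p])
    (hA : A.det ≠ 0) (hB : B.det ≠ 0) (hX : InGLZp p d X)
    (k : ℕ) (hk : k ≤ d) :
    mVal p d k (X * A) B = mVal p d k A B ∧ mVal p d k A (X * B) = mVal p d k A B := by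
  constructor
  · exact mVal_left_invariant p d k A B X hX
  · rw [mVal_eq_sInf, mVal_eq_sInf, candSet_flip p d k A (X * B) hk,
      candSet_flip p d k A B hk, ← mVal_eq_sInf, ← mVal_eq_sInf]
    exact mVal_left_invariant p d (d - k) B A X hX

end BT
end

section
/- Fix a_0, …, a_d ∈ ℤ and A, B ∈ GL_d(ℚ_p), and set γ(A,B) = Σ_{i=0}^d a_i · m_{A:i,B:d−i}. Then the following are equivalent: (i) γ(A',B') = γ(A,B) for all A' = p^j X A and B' = p^k Y B with X, Y ∈ GL_d(ℤ_p) and j, k ∈ ℤ; (ii) Σ_{i=0}^d i·a_i = 0 and Σ_{i=0}^d (d−i)·a_i = 0. -/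
open Pointwise

namespace BT

variable (p : ℕ) [Fact p.Prime] (d : ℕ)

section Aux

variable {p d}

lemma candVals_finite (i : ℕ) (A B : Matrix (Fin d) (Fin d) ℚ_[p]) :
    {v : ℤ | ∃ X : Matrix (Fin d) (Fin d) ℚ_[p],
      IsCandidate p d i A B X ∧ X.det ≠ 0 ∧ v = X.det.valuation}.Finite := by
  apply Set.Finite.subset (Set.finite_range fun Sρ : Finset (Fin d) × (Fin d → Fin d) =>
    (Matrix.of fun n => if n ∈ Sρ.1 then A (Sρ.2 n) else B (Sρ.2 n)).det.valuation)
  rintro v ⟨X, ⟨S, ρ, -, -, -, hrow⟩, -, rfl⟩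
  have hx : X = Matrix.of fun n => if n ∈ S then A (ρ n) else B (ρ n) := by
    ext n b
    rw [show X n = _ from hrow n]
    by_cases h : n ∈ S <;> simp [h]
  exact ⟨(S, ρ), by rw [hx]⟩

lemma det_updateRow_finset_sum (X : Matrix (Fin d) (Fin d) ℚ_[p]) (j₀ : Fin d)
    (t : Finset (Fin d)) (f : Fin d → Fin d → ℚ_[p]) :
    (X.updateRow j₀ (∑ s ∈ t, f s)).det = ∑ s ∈ t, (X.updateRow j₀ (f s)).det := by
  induction t using Finset.induction_on with
  | empty =>
      simp only [Finset.sum_empty]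
      exact Matrix.det_eq_zero_of_row_eq_zero j₀ fun b => by simp
  | insert _ _ hs ih =>
      rw [Finset.sum_insert hs, Matrix.det_updateRow_add, ih, Finset.sum_insert hs]

lemma exists_candidate {A B : Matrix (Fin d) (Fin d) ℚ_[p]} (hA : A.det ≠ 0) (hB : B.det ≠ 0) :
    ∀ k : ℕ, k ≤ d → ∃ X, IsCandidate p d (d - k) A B X ∧ X.det ≠ 0 := by
  intro k
  induction k with
  | zero =>
    intro _
    exact ⟨A, ⟨Finset.univ, id, by simp, Set.injOn_id _, Set.injOn_id _, fun n => by simp⟩, hA⟩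
  | succ k ih =>
    intro hk
    obtain ⟨X, ⟨S, ρ, hcard, hinjS, hinjSc, hrow⟩, hdet⟩ := ih (Nat.le_of_succ_le hk)
    have hSne : S.Nonempty := Finset.card_pos.1 (by rw [hcard]; omega)
    obtain ⟨j₀, hj₀⟩ := hSne
    have hBunit : IsUnit B.det := isUnit_iff_ne_zero.2 hB
    have hext : ∃ t, (X.updateRow j₀ (B t)).det ≠ 0 := by
      by_contra hall
      push_neg at hall
      set y := Matrix.vecMul (X j₀) B⁻¹ with hy
      have hyB : X j₀ = ∑ s, y s • B s := by
        have h1 : Matrix.vecMul y B = X j₀ := by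
          rw [hy, Matrix.vecMul_vecMul, Matrix.nonsing_inv_mul B hBunit, Matrix.vecMul_one]
        funext b
        rw [← h1]
        simp [Matrix.vecMul, dotProduct, Finset.sum_apply]
      have hzero : X.det = 0 := by
        calc X.det = (X.updateRow j₀ (∑ s, y s • B s)).det := by
              rw [← hyB, Matrix.updateRow_eq_self]
          _ = ∑ s, (X.updateRow j₀ (y s • B s)).det :=
              det_updateRow_finset_sum X j₀ Finset.univ _
          _ = ∑ s, y s * (X.updateRow j₀ (B s)).det := by
              refine Finset.sum_congr rfl fun s _ => ?_
              rw [Matrix.det_updateRow_smul]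
          _ = 0 := by simp [hall]
      exact hdet hzero
    obtain ⟨t, hdet'⟩ := hext
    refine ⟨X.updateRow j₀ (B t), ⟨S.erase j₀, Function.update ρ j₀ t, ?_, ?_, ?_, ?_⟩, hdet'⟩
    · rw [Finset.card_erase_of_mem hj₀, hcard]; omega
    · intro a ha b hb hab
      have ha' : a ∈ S.erase j₀ := Finset.mem_coe.1 ha
      have hb' : b ∈ S.erase j₀ := Finset.mem_coe.1 hb
      rw [Function.update_of_ne (Finset.ne_of_mem_erase ha'),
        Function.update_of_ne (Finset.ne_of_mem_erase hb')] at hab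
      exact hinjS (Finset.mem_of_mem_erase ha') (Finset.mem_of_mem_erase hb') hab
    · intro a ha b hb hab
      have ha' : a ∉ S.erase j₀ := Finset.mem_compl.1 (Finset.mem_coe.1 ha)
      have hb' : b ∉ S.erase j₀ := Finset.mem_compl.1 (Finset.mem_coe.1 hb)
      have keyrow : ∀ c : Fin d, c ≠ j₀ → c ∉ S.erase j₀ →
          (X.updateRow j₀ (B t)) c = B (ρ c) := by
        intro c hc hc'
        have hcS : c ∉ S := fun h => hc' (Finset.mem_erase.2 ⟨hc, h⟩)
        rw [Matrix.updateRow_ne hc, hrow c, if_neg hcS]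
      by_cases haj : a = j₀ <;> by_cases hbj : b = j₀
      · rw [haj, hbj]
      · exfalso
        subst haj
        rw [Function.update_self, Function.update_of_ne hbj] at hab
        apply hdet'
        refine Matrix.det_zero_of_row_eq (fun h => hbj h.symm) ?_
        rw [Matrix.updateRow_self, keyrow b hbj hb', hab]
      · exfalso
        subst hbj
        rw [Function.update_self, Function.update_of_ne haj] at hab
        apply hdet'
        refine Matrix.det_zero_of_row_eq (fun h => haj h.symm) ?_
        rw [Matrix.updateRow_self, keyrow a haj ha', ← hab]
      · rw [Function.update_of_ne haj, Function.update_of_ne hbj] at hab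
        have haS : a ∉ S := fun h => ha' (Finset.mem_erase.2 ⟨haj, h⟩)
        have hbS : b ∉ S := fun h => hb' (Finset.mem_erase.2 ⟨hbj, h⟩)
        exact hinjSc (Finset.mem_coe.2 (Finset.mem_compl.2 haS))
          (Finset.mem_coe.2 (Finset.mem_compl.2 hbS)) hab
    · intro n
      by_cases hn : n = j₀
      · subst hn
        rw [Matrix.updateRow_self, if_neg (by simp), Function.update_self]
      · rw [Matrix.updateRow_ne hn, hrow n, Function.update_of_ne hn]
        by_cases hnS : n ∈ S
        · rw [if_pos hnS, if_pos (Finset.mem_erase.2 ⟨hn, hnS⟩)]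
        · rw [if_neg hnS, if_neg fun h => hnS (Finset.mem_of_mem_erase h)]

lemma candVals_nonempty {A B : Matrix (Fin d) (Fin d) ℚ_[p]} (hA : A.det ≠ 0) (hB : B.det ≠ 0)
    {i : ℕ} (hi : i ≤ d) :
    {v : ℤ | ∃ X : Matrix (Fin d) (Fin d) ℚ_[p],
      IsCandidate p d i A B X ∧ X.det ≠ 0 ∧ v = X.det.valuation}.Nonempty := by
  obtain ⟨X, hX, hdet⟩ := exists_candidate hA hB (d - i) (Nat.sub_le d i)
  rw [Nat.sub_sub_self hi] at hX
  exact ⟨X.det.valuation, X, hX, hdet, rfl⟩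

lemma mVal_le {i : ℕ} {A B : Matrix (Fin d) (Fin d) ℚ_[p]} {v : ℤ}
    (hv : v ∈ {v : ℤ | ∃ X : Matrix (Fin d) (Fin d) ℚ_[p],
      IsCandidate p d i A B X ∧ X.det ≠ 0 ∧ v = X.det.valuation}) :
    mVal p d i A B ≤ v :=
  csInf_le (candVals_finite i A B).bddBelow hv

lemma key_lower {A B X Y : Matrix (Fin d) (Fin d) ℚ_[p]}
    (hX : ∀ a b, ‖X a b‖ ≤ 1) (hY : ∀ a b, ‖Y a b‖ ≤ 1) (j k : ℤ) {i : ℕ} (hi : i ≤ d)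
    {v : ℤ}
    (hv : v ∈ {v : ℤ | ∃ C : Matrix (Fin d) (Fin d) ℚ_[p],
      IsCandidate p d i ((p : ℚ_[p]) ^ j • (X * A)) ((p : ℚ_[p]) ^ k • (Y * B)) C ∧
        C.det ≠ 0 ∧ v = C.det.valuation}) :
    mVal p d i A B + i * j + ((d : ℤ) - i) * k ≤ v := by
  obtain ⟨C, ⟨S, ρ, hS, -, -, hrow⟩, hC0, rfl⟩ := hv
  have hp1 : (1 : ℝ) < p := by exact_mod_cast (Fact.out : p.Prime).one_lt
  have hp0 : (0 : ℝ) < p := lt_trans one_pos hp1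
  set m : ℤ := mVal p d i A B with hm
  set g : Fin d → Fin d → (Fin d → ℚ_[p]) := fun n s =>
    if n ∈ S then ((p : ℚ_[p]) ^ j * X (ρ n) s) • A s
    else ((p : ℚ_[p]) ^ k * Y (ρ n) s) • B s with hg
  have hCrow : ∀ n, C n = ∑ s, g n s := by
    intro n
    rw [hrow n]
    by_cases hn : n ∈ S
    · funext b
      simp only [hg, hn, if_true, Finset.sum_apply, Pi.smul_apply, smul_eq_mul,
        Matrix.smul_apply, Matrix.mul_apply, Finset.mul_sum, mul_assoc]
    · funext b
      simp only [hg, hn, if_false, Finset.sum_apply, Pi.smul_apply, smul_eq_mul,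
        Matrix.smul_apply, Matrix.mul_apply, Finset.mul_sum, mul_assoc]
  have hdet : C.det = ∑ r : (n : Fin d) → Fin d,
      Matrix.detRowAlternating (fun n => g n (r n)) := by
    have hC : (C : Fin d → Fin d → ℚ_[p]) = fun n => ∑ s, g n s := funext hCrow
    calc C.det = Matrix.detRowAlternating (fun n => ∑ s, g n s) := by rw [← hC]; rfl
      _ = _ := Matrix.detRowAlternating.toMultilinearMap.map_sum g
  have hterm : ∀ r : (n : Fin d) → Fin d,
      ‖Matrix.detRowAlternating (fun n => g n (r n))‖ ≤
        (p : ℝ) ^ (-(m + i * j + ((d : ℤ) - i) * k)) := by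
    intro r
    set c : Fin d → ℚ_[p] := fun n =>
      if n ∈ S then (p : ℚ_[p]) ^ j * X (ρ n) (r n)
      else (p : ℚ_[p]) ^ k * Y (ρ n) (r n) with hc
    set w : Matrix (Fin d) (Fin d) ℚ_[p] :=
      Matrix.of fun n => if n ∈ S then A (r n) else B (r n) with hw
    have hgr : (fun n => g n (r n)) = fun n => c n • w n := by
      funext n b; by_cases hn : n ∈ S <;> simp [hg, hc, hw, hn, Matrix.of_apply, mul_assoc]
    have hsmul : Matrix.detRowAlternating (fun n => c n • w n) = (∏ n, c n) • w.det :=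
      Matrix.detRowAlternating.toMultilinearMap.map_smul_univ c w
    rw [hgr, hsmul, smul_eq_mul, norm_mul]
    have hb1 : ‖∏ n, c n‖ ≤ (p : ℝ) ^ (-(i * j + ((d : ℤ) - i) * k)) := by
      have hcle : ∀ n, n ∈ S → ‖c n‖ ≤ (p : ℝ) ^ (-j) := by
        intro n hn
        rw [hc]
        simp only [if_pos hn]
        rw [norm_mul, Padic.norm_p_zpow]
        calc (p : ℝ) ^ (-j) * ‖X (ρ n) (r n)‖ ≤ (p : ℝ) ^ (-j) * 1 :=
              mul_le_mul_of_nonneg_left (hX _ _) (zpow_nonneg hp0.le _)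
          _ = _ := mul_one _
      have hcle' : ∀ n, n ∈ Sᶜ → ‖c n‖ ≤ (p : ℝ) ^ (-k) := by
        intro n hn
        rw [hc]
        simp only [if_neg (Finset.mem_compl.1 hn)]
        rw [norm_mul, Padic.norm_p_zpow]
        calc (p : ℝ) ^ (-k) * ‖Y (ρ n) (r n)‖ ≤ (p : ℝ) ^ (-k) * 1 :=
              mul_le_mul_of_nonneg_left (hY _ _) (zpow_nonneg hp0.le _)
          _ = _ := mul_one _
      calc ‖∏ n, c n‖ = ∏ n, ‖c n‖ := norm_prod _ _
        _ = (∏ n ∈ S, ‖c n‖) * ∏ n ∈ Sᶜ, ‖c n‖ := (Finset.prod_mul_prod_compl S _).symm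
        _ ≤ (∏ _n ∈ S, (p : ℝ) ^ (-j)) * ∏ _n ∈ Sᶜ, (p : ℝ) ^ (-k) := by
            apply mul_le_mul
            · exact Finset.prod_le_prod (fun n _ => norm_nonneg _) hcle
            · exact Finset.prod_le_prod (fun n _ => norm_nonneg _) hcle'
            · exact Finset.prod_nonneg fun n _ => norm_nonneg _
            · exact Finset.prod_nonneg fun n _ => zpow_nonneg hp0.le _
        _ = ((p : ℝ) ^ (-j)) ^ i * ((p : ℝ) ^ (-k)) ^ (d - i) := by
            rw [Finset.prod_const, Finset.prod_const, hS, Finset.card_compl, hS,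
              Fintype.card_fin]
        _ = (p : ℝ) ^ (-(i * j + ((d : ℤ) - i) * k)) := by
            rw [← zpow_natCast ((p : ℝ) ^ (-j)) i, ← zpow_natCast ((p : ℝ) ^ (-k)) (d - i),
              ← zpow_mul, ← zpow_mul, ← zpow_add₀ (ne_of_gt hp0)]
            congr 1
            rw [Nat.cast_sub hi]
            ring
    have hb2 : ‖w.det‖ ≤ (p : ℝ) ^ (-m) := by
      by_cases hw0 : w.det = 0
      · rw [hw0, norm_zero]
        exact zpow_nonneg hp0.le _
      · have hinj1 : Set.InjOn r ↑S := by
          intro a ha b hb hab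
          by_contra hne
          refine hw0 (Matrix.det_zero_of_row_eq hne ?_)
          funext s
          simp only [hw, Matrix.of_apply, if_pos (Finset.mem_coe.1 ha),
            if_pos (Finset.mem_coe.1 hb), hab]
        have hinj2 : Set.InjOn r ↑Sᶜ := by
          intro a ha b hb hab
          by_contra hne
          refine hw0 (Matrix.det_zero_of_row_eq hne ?_)
          funext s
          simp only [hw, Matrix.of_apply, if_neg (Finset.mem_compl.1 (Finset.mem_coe.1 ha)),
            if_neg (Finset.mem_compl.1 (Finset.mem_coe.1 hb)), hab]
        have hmem : w.det.valuation ∈ {v : ℤ | ∃ X : Matrix (Fin d) (Fin d) ℚ_[p],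
            IsCandidate p d i A B X ∧ X.det ≠ 0 ∧ v = X.det.valuation} :=
          ⟨w, ⟨S, r, hS, hinj1, hinj2, fun n => rfl⟩, hw0, rfl⟩
        have hle := mVal_le hmem
        rw [Padic.norm_eq_zpow_neg_valuation hw0]
        exact zpow_le_zpow_right₀ hp1.le (neg_le_neg hle)
    calc ‖∏ n, c n‖ * ‖w.det‖
        ≤ (p : ℝ) ^ (-(i * j + ((d : ℤ) - i) * k)) * (p : ℝ) ^ (-m) :=
          mul_le_mul hb1 hb2 (norm_nonneg _) (zpow_nonneg hp0.le _)
      _ = (p : ℝ) ^ (-(m + i * j + ((d : ℤ) - i) * k)) := by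
          rw [← zpow_add₀ (ne_of_gt hp0)]
          congr 1
          ring
  have hnorm : ‖C.det‖ ≤ (p : ℝ) ^ (-(m + i * j + ((d : ℤ) - i) * k)) := by
    rw [hdet]
    exact IsUltrametricDist.norm_sum_le_of_forall_le_of_nonneg
      (zpow_nonneg hp0.le _) fun r _ => hterm r
  rw [Padic.norm_eq_zpow_neg_valuation hC0] at hnorm
  have := (zpow_le_zpow_iff_right₀ hp1).1 hnorm
  linarith

lemma inGLZp_det_ne_zero {X : Matrix (Fin d) (Fin d) ℚ_[p]} (hX : InGLZp p d X) :
    X.det ≠ 0 := by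
  intro h
  have := hX.2
  rw [h, norm_zero] at this
  exact zero_ne_one this

lemma exists_left_inv {X : Matrix (Fin d) (Fin d) ℚ_[p]} (hX : InGLZp p d X) :
    ∃ Z : Matrix (Fin d) (Fin d) ℚ_[p], (∀ a b, ‖Z a b‖ ≤ 1) ∧ Z * X = 1 := by
  set X' : Matrix (Fin d) (Fin d) ℤ_[p] :=
    Matrix.of fun a b => (⟨X a b, hX.1 a b⟩ : ℤ_[p]) with hX'
  have hmap : X'.map (PadicInt.Coe.ringHom (p := p)) = X := by
    ext a b; rfl
  have hdet : ((X'.det : ℤ_[p]) : ℚ_[p]) = X.det := by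
    have h := (PadicInt.Coe.ringHom (p := p)).map_det X'
    rw [RingHom.mapMatrix_apply, hmap] at h
    exact h
  have hu : IsUnit X'.det := by
    rw [PadicInt.isUnit_iff, PadicInt.norm_def, hdet]
    exact hX.2
  letI := X'.invertibleOfIsUnitDet hu
  refine ⟨(⅟X').map (PadicInt.Coe.ringHom (p := p)), ?_, ?_⟩
  · intro a b
    exact PadicInt.norm_le_one _
  · rw [← hmap, ← Matrix.map_mul, invOf_mul_self, Matrix.map_one _ (map_zero _) (map_one _)]

lemma mVal_shift {A B X Y : Matrix (Fin d) (Fin d) ℚ_[p]} (hA : A.det ≠ 0) (hB : B.det ≠ 0)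
    (hX : InGLZp p d X) (hY : InGLZp p d Y) (j k : ℤ) {i : ℕ} (hi : i ≤ d) :
    mVal p d i ((p : ℚ_[p]) ^ j • (X * A)) ((p : ℚ_[p]) ^ k • (Y * B)) =
      mVal p d i A B + i * j + ((d : ℤ) - i) * k := by
  have hpne : (p : ℚ_[p]) ≠ 0 := Nat.cast_ne_zero.2 (Fact.out : p.Prime).ne_zero
  obtain ⟨Z, hZ, hZX⟩ := exists_left_inv hX
  obtain ⟨W, hW, hWY⟩ := exists_left_inv hY
  have hdA' : ((p : ℚ_[p]) ^ j • (X * A)).det ≠ 0 := by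
    rw [Matrix.det_smul, Matrix.det_mul]
    exact mul_ne_zero (pow_ne_zero _ (zpow_ne_zero _ hpne))
      (mul_ne_zero (inGLZp_det_ne_zero hX) hA)
  have hdB' : ((p : ℚ_[p]) ^ k • (Y * B)).det ≠ 0 := by
    rw [Matrix.det_smul, Matrix.det_mul]
    exact mul_ne_zero (pow_ne_zero _ (zpow_ne_zero _ hpne))
      (mul_ne_zero (inGLZp_det_ne_zero hY) hB)
  apply le_antisymm
  · have hrev : ∀ v ∈ {v : ℤ | ∃ C : Matrix (Fin d) (Fin d) ℚ_[p],
        IsCandidate p d i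
          ((p : ℚ_[p]) ^ (-j) • (Z * ((p : ℚ_[p]) ^ j • (X * A))))
          ((p : ℚ_[p]) ^ (-k) • (W * ((p : ℚ_[p]) ^ k • (Y * B)))) C ∧
          C.det ≠ 0 ∧ v = C.det.valuation},
        mVal p d i ((p : ℚ_[p]) ^ j • (X * A)) ((p : ℚ_[p]) ^ k • (Y * B)) +
          i * (-j) + ((d : ℤ) - i) * (-k) ≤ v :=
      fun v hv => key_lower hZ hW (-j) (-k) hi hv
    have hAeq : (p : ℚ_[p]) ^ (-j) • (Z * ((p : ℚ_[p]) ^ j • (X * A))) = A := by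
      rw [Matrix.mul_smul, smul_smul, ← zpow_add₀ hpne, neg_add_cancel, zpow_zero, one_smul,
        ← Matrix.mul_assoc, hZX, Matrix.one_mul]
    have hBeq : (p : ℚ_[p]) ^ (-k) • (W * ((p : ℚ_[p]) ^ k • (Y * B))) = B := by
      rw [Matrix.mul_smul, smul_smul, ← zpow_add₀ hpne, neg_add_cancel, zpow_zero, one_smul,
        ← Matrix.mul_assoc, hWY, Matrix.one_mul]
    rw [hAeq, hBeq] at hrev
    have hfin := le_csInf (candVals_nonempty hA hB hi) hrev
    have : mVal p d i ((p : ℚ_[p]) ^ j • (X * A)) ((p : ℚ_[p]) ^ k • (Y * B)) +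
        i * (-j) + ((d : ℤ) - i) * (-k) ≤ mVal p d i A B := hfin
    linarith
  · exact le_csInf (candVals_nonempty hdA' hdB' hi)
      fun v hv => key_lower hX.1 hY.1 j k hi hv

lemma inGLZp_one : InGLZp p d (1 : Matrix (Fin d) (Fin d) ℚ_[p]) := by
  constructor
  · intro a b
    by_cases hab : a = b <;> simp [Matrix.one_apply, hab]
  · simp

end Aux

/-- **Invariance conditions (vertex part).** For fixed `A, B`, the linear
combination `γ(A,B) = Σ_i a_i · m_{A:i,B:d−i}` is independent of the choice of
matrix representatives (i.e. invariant under `A ↦ p^j X A`, `B ↦ p^k Y B` with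
`X, Y ∈ GL_d(ℤ_p)`, `j, k ∈ ℤ`) iff `Σ i·a_i = 0` and `Σ (d−i)·a_i = 0`. -/
theorem invariance_conditions_vertex (hd : 2 ≤ d) (a : ℕ → ℤ)
    (A B : Matrix (Fin d) (Fin d) ℚ_[p]) (hA : A.det ≠ 0) (hB : B.det ≠ 0) :
    (∀ (X Y : Matrix (Fin d) (Fin d) ℚ_[p]) (j k : ℤ),
        InGLZp p d X → InGLZp p d Y →
        ∑ i ∈ Finset.range (d + 1),
            a i * mVal p d i ((p : ℚ_[p]) ^ j • (X * A)) ((p : ℚ_[p]) ^ k • (Y * B)) =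
          ∑ i ∈ Finset.range (d + 1), a i * mVal p d i A B) ↔
      (∑ i ∈ Finset.range (d + 1), (i : ℤ) * a i = 0 ∧
        ∑ i ∈ Finset.range (d + 1), ((d : ℤ) - (i : ℤ)) * a i = 0) := by
  have expand : ∀ (j k : ℤ),
      ∑ i ∈ Finset.range (d + 1), a i * (mVal p d i A B + i * j + ((d : ℤ) - i) * k) =
        (∑ i ∈ Finset.range (d + 1), a i * mVal p d i A B) +
          j * (∑ i ∈ Finset.range (d + 1), (i : ℤ) * a i) +
          k * (∑ i ∈ Finset.range (d + 1), ((d : ℤ) - (i : ℤ)) * a i) := by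
    intro j k
    rw [Finset.mul_sum, Finset.mul_sum, ← Finset.sum_add_distrib, ← Finset.sum_add_distrib]
    exact Finset.sum_congr rfl fun i _ => by ring
  have sumshift : ∀ (X Y : Matrix (Fin d) (Fin d) ℚ_[p]) (j k : ℤ),
      InGLZp p d X → InGLZp p d Y →
      ∑ i ∈ Finset.range (d + 1),
          a i * mVal p d i ((p : ℚ_[p]) ^ j • (X * A)) ((p : ℚ_[p]) ^ k • (Y * B)) =
        ∑ i ∈ Finset.range (d + 1), a i * (mVal p d i A B + i * j + ((d : ℤ) - i) * k) := by
    intro X Y j k hX hY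
    refine Finset.sum_congr rfl fun i hi => ?_
    rw [mVal_shift hA hB hX hY j k (Nat.lt_succ_iff.1 (Finset.mem_range.1 hi))]
  constructor
  · intro h
    constructor
    · have h1 := h 1 1 1 0 inGLZp_one inGLZp_one
      rw [sumshift 1 1 1 0 inGLZp_one inGLZp_one, expand 1 0] at h1
      linarith
    · have h2 := h 1 1 0 1 inGLZp_one inGLZp_one
      rw [sumshift 1 1 0 1 inGLZp_one inGLZp_one, expand 0 1] at h2
      linarith
  · rintro ⟨h1, h2⟩ X Y j k hX hY
    rw [sumshift X Y j k hX hY, expand j k, h1, h2, mul_zero, mul_zero, add_zero, add_zero]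

end BT
end

section
/- Let A ∈ GL_d(ℚ_p) be in localized form with permutation π, and set α_j = ν(A_{j,π(j)}) for j = 1,…,d. Then for each integer 0 ≤ i ≤ d: m_{A:i, I:d−i} = Σ_{j=1}^i α_j, where I is the d×d identity matrix. -/
open Pointwise

namespace BT

variable (p : ℕ) [Fact p.Prime] (d : ℕ)

section Aux

variable {p : ℕ} [Fact p.Prime]

lemma padic_valuation_eq_of_norm {x : ℚ_[p]} (hx : x ≠ 0) {n : ℤ}
    (h : ‖x‖ = (p : ℝ) ^ (-n)) : x.valuation = n := by
  have hp1 : (1 : ℝ) < (p : ℝ) := by exact_mod_cast (Fact.out : p.Prime).one_lt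
  have hp0 : (0 : ℝ) < (p : ℝ) := lt_trans one_pos hp1
  have h2 : ((p : ℝ)) ^ (-x.valuation) = (p : ℝ) ^ (-n) :=
    (Padic.norm_eq_zpow_neg_valuation hx).symm.trans h
  have := zpow_right_injective₀ hp0 (ne_of_gt hp1) h2
  omega

lemma prod_zpow_sum {a : ℝ} (ha : a ≠ 0) {β : Type*} (s : Finset β) (f : β → ℤ) :
    ∏ j ∈ s, a ^ (f j) = a ^ (∑ j ∈ s, f j) := by
  classical
  induction s using Finset.induction with
  | empty => simp
  | insert _ _ h ih => rw [Finset.prod_insert h, Finset.sum_insert h, ih, ← zpow_add₀ ha]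

lemma sum_mono_filter_le {d i : ℕ} (hi : i ≤ d) (g : Fin d → ℤ)
    (mono : ∀ a b : Fin d, a ≤ b → g a ≤ g b)
    (T : Finset (Fin d)) (hT : T.card = i) :
    ∑ j ∈ Finset.univ.filter (fun j : Fin d => (j : ℕ) < i), g j ≤ ∑ j ∈ T, g j := by
  classical
  set e := T.orderEmbOfFin hT with he
  have hTmap : T = Finset.univ.map e.toEmbedding := by
    ext j
    simp only [Finset.mem_map, Finset.mem_univ, true_and]
    constructor
    · intro hj
      have : j ∈ Set.range e := by rw [Finset.range_orderEmbOfFin]; exact hj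
      obtain ⟨k, hk⟩ := this
      exact ⟨k, hk⟩
    · rintro ⟨k, rfl⟩
      exact Finset.orderEmbOfFin_mem T hT k
  have hSmap : Finset.univ.filter (fun j : Fin d => (j : ℕ) < i)
      = Finset.univ.map (Fin.castLEEmb hi) := by
    ext j
    simp only [Finset.mem_filter, Finset.mem_univ, true_and, Finset.mem_map]
    constructor
    · intro hj
      exact ⟨⟨(j : ℕ), hj⟩, by ext; simp⟩
    · rintro ⟨k, rfl⟩
      simpa using k.2
  have key : ∀ n (hn : n < i), n ≤ ((e ⟨n, hn⟩ : Fin d) : ℕ) := by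
    intro n
    induction n with
    | zero => intro _; exact Nat.zero_le _
    | succ m ih =>
      intro hn
      have hm : m < i := Nat.lt_of_succ_lt hn
      have hlt : e ⟨m, hm⟩ < e ⟨m + 1, hn⟩ := e.strictMono (by simp [Fin.lt_def])
      have h1 := ih hm
      have h2 : m < ((e ⟨m + 1, hn⟩ : Fin d) : ℕ) :=
        lt_of_le_of_lt h1 (by exact_mod_cast hlt)
      omega
  rw [hTmap, hSmap, Finset.sum_map, Finset.sum_map]
  apply Finset.sum_le_sum
  intro k _
  apply mono
  rw [Fin.le_def]
  simpa using key (k : ℕ) k.2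

end Aux

/-- **Computation of `m` for a localized matrix.** If `A` is in localized form
with permutation `π` and `α_j = ν(A_{j,π(j)})`, then
`m_{A:i, I:d−i} = Σ_{j<i} α_j` (indices of `Fin d` being `0,…,d−1`). -/
theorem mVal_of_localized (hd : 2 ≤ d) (A : Matrix (Fin d) (Fin d) ℚ_[p])
    (hA : A.det ≠ 0) (π : Equiv.Perm (Fin d))
    (h1 : ∀ i : Fin d, ∃ n : ℤ, A i (π i) = (p : ℚ_[p]) ^ n)
    (h2 : ∀ i j k : Fin d, i ≤ j → ‖A j k‖ ≤ ‖A i (π i)‖)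
    (h3 : ∀ i j : Fin d, i < j → A j (π i) = 0)
    (h4 : ∀ i j : Fin d, j < π i → ‖A i j‖ < ‖A i (π i)‖)
    (i : ℕ) (hi : i ≤ d) :
    mVal p d i A 1 =
      ∑ j ∈ Finset.univ.filter (fun j : Fin d => (j : ℕ) < i), (A j (π j)).valuation := by
  classical
  have hprime : p.Prime := Fact.out
  have hp1 : (1 : ℝ) < (p : ℝ) := by exact_mod_cast hprime.one_lt
  have hp0 : (0 : ℝ) < (p : ℝ) := lt_trans one_pos hp1
  have hpQ : (p : ℚ_[p]) ≠ 0 := by exact_mod_cast hprime.ne_zero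
  set α : Fin d → ℤ := fun j => (A j (π j)).valuation with hα
  set S : Finset (Fin d) := Finset.univ.filter (fun j : Fin d => (j : ℕ) < i) with hSdef
  set B : ℤ := ∑ j ∈ S, α j with hB
  have hpiv : ∀ j : Fin d, A j (π j) ≠ 0 := fun j => by
    obtain ⟨n, hn⟩ := h1 j; rw [hn]; exact zpow_ne_zero _ hpQ
  have hpivnorm : ∀ j : Fin d, ‖A j (π j)‖ = (p : ℝ) ^ (-(α j)) := fun j =>
    Padic.norm_eq_zpow_neg_valuation (hpiv j)
  have hmono : ∀ a b : Fin d, a ≤ b → α a ≤ α b := by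
    intro a b hab
    have h := h2 a b (π b) hab
    rw [hpivnorm a, hpivnorm b] at h
    have := (zpow_le_zpow_iff_right₀ hp1).mp h
    omega
  have hScard : S.card = i := by
    have hmapS : S = Finset.univ.map (Fin.castLEEmb hi) := by
      ext j
      simp only [hSdef, Finset.mem_filter, Finset.mem_univ, true_and, Finset.mem_map]
      constructor
      · intro hj
        exact ⟨⟨(j : ℕ), hj⟩, by ext; simp⟩
      · rintro ⟨k, rfl⟩
        simpa using k.2
    rw [hmapS]
    simp
  -- Lower bound: every candidate has determinant valuation at least `B`.
  have lower : ∀ v ∈ {v : ℤ | ∃ X : Matrix (Fin d) (Fin d) ℚ_[p],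
      IsCandidate p d i A 1 X ∧ X.det ≠ 0 ∧ v = X.det.valuation}, B ≤ v := by
    rintro v ⟨X, ⟨T, ρ, hTcard, hρ1, hρ2, hX⟩, hdet, rfl⟩
    have hρ1' : ∀ a ∈ T, ∀ b ∈ T, ρ a = ρ b → a = b := fun a ha b hb hab =>
      hρ1 (Finset.mem_coe.mpr ha) (Finset.mem_coe.mpr hb) hab
    have hTi : (T.image ρ).card = i := by
      rw [Finset.card_image_of_injOn hρ1, hTcard]
    have hBle : B ≤ ∑ t ∈ T.image ρ, α t := by
      rw [hB, hSdef]
      exact sum_mono_filter_le hi α hmono _ hTi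
    have hnorm : ‖X.det‖ ≤ (p : ℝ) ^ (-(∑ t ∈ T.image ρ, α t)) := by
      rw [← Matrix.det_transpose, Matrix.det_apply']
      apply IsUltrametricDist.norm_sum_le_of_forall_le_of_nonneg (zpow_nonneg hp0.le _)
      intro σ _
      rw [norm_mul]
      have hsign : ‖((Equiv.Perm.sign σ : ℤ) : ℚ_[p])‖ ≤ 1 := by
        rcases Int.units_eq_one_or (Equiv.Perm.sign σ) with h | h <;> simp [h]
      have hprod : ‖∏ j, X.transpose (σ j) j‖ ≤ (p : ℝ) ^ (-(∑ t ∈ T.image ρ, α t)) := by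
        rw [norm_prod]
        have hfac : ∀ j : Fin d,
            ‖X.transpose (σ j) j‖ ≤ (if j ∈ T then (p : ℝ) ^ (-(α (ρ j))) else 1) := by
          intro j
          have : X.transpose (σ j) j = X j (σ j) := rfl
          rw [this, hX j]
          by_cases hj : j ∈ T
          · simp only [hj, if_true]
            calc ‖A (ρ j) (σ j)‖ ≤ ‖A (ρ j) (π (ρ j))‖ := h2 (ρ j) (ρ j) (σ j) le_rfl
              _ = _ := hpivnorm (ρ j)
          · simp only [hj, if_false]
            rw [Matrix.one_apply]
            split <;> simp
        calc (∏ j, ‖X.transpose (σ j) j‖)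
            ≤ ∏ j, (if j ∈ T then (p : ℝ) ^ (-(α (ρ j))) else 1) :=
              Finset.prod_le_prod (fun _ _ => norm_nonneg _) (fun j _ => hfac j)
          _ = ∏ j ∈ T, (p : ℝ) ^ (-(α (ρ j))) := by
              rw [Finset.prod_ite_mem, Finset.univ_inter]
          _ = ∏ t ∈ T.image ρ, (p : ℝ) ^ (-(α t)) :=
              by rw [Finset.prod_image (fun a ha b hb hab => hρ1' a ha b hb hab)]
          _ = (p : ℝ) ^ (∑ t ∈ T.image ρ, -(α t)) := prod_zpow_sum (ne_of_gt hp0) _ _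
          _ = (p : ℝ) ^ (-(∑ t ∈ T.image ρ, α t)) := by rw [Finset.sum_neg_distrib]
      calc ‖((Equiv.Perm.sign σ : ℤ) : ℚ_[p])‖ * ‖∏ j, X.transpose (σ j) j‖
          ≤ 1 * ((p : ℝ) ^ (-(∑ t ∈ T.image ρ, α t))) :=
            mul_le_mul hsign hprod (norm_nonneg _) zero_le_one
        _ = (p : ℝ) ^ (-(∑ t ∈ T.image ρ, α t)) := one_mul _
    rw [Padic.norm_eq_zpow_neg_valuation hdet] at hnorm
    have := (zpow_le_zpow_iff_right₀ hp1).mp hnorm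
    omega
  -- Upper bound: construct the optimal candidate.
  have hcompl : (Sᶜ : Finset (Fin d)).card = ((S.image π)ᶜ : Finset (Fin d)).card := by
    rw [Finset.card_compl, Finset.card_compl, Finset.card_image_of_injective _ π.injective]
  let e : (Sᶜ : Finset (Fin d)) ≃ ((S.image π)ᶜ : Finset (Fin d)) := Finset.equivOfCardEq hcompl
  let ρ : Fin d → Fin d := fun j =>
    if h : j ∈ S then j else (e ⟨j, Finset.mem_compl.mpr h⟩ : Fin d)
  have hρS : ∀ j ∈ S, ρ j = j := fun j hj => by simp only [ρ, dif_pos hj]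
  have hρc : ∀ j (h : j ∉ S), ρ j = (e ⟨j, Finset.mem_compl.mpr h⟩ : Fin d) := fun j h => by
    simp only [ρ, dif_neg h]
  have hρ_notmem : ∀ j, j ∉ S → ρ j ∉ S.image π := by
    intro j h
    rw [hρc j h]
    exact Finset.mem_compl.mp (e ⟨j, Finset.mem_compl.mpr h⟩).2
  have hρinjc : ∀ a, a ∉ S → ∀ b, b ∉ S → ρ a = ρ b → a = b := by
    intro a ha b hb hab
    rw [hρc a ha, hρc b hb] at hab
    have := e.injective (Subtype.ext hab)
    exact congrArg Subtype.val this
  let X : Matrix (Fin d) (Fin d) ℚ_[p] := fun j =>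
    if j ∈ S then A (ρ j) else (1 : Matrix (Fin d) (Fin d) ℚ_[p]) (ρ j)
  have hfinj : Function.Injective (fun j => if j ∈ S then π j else ρ j) := by
    intro a b hab
    by_cases ha : a ∈ S <;> by_cases hb : b ∈ S <;>
      simp only [ha, hb, if_true, if_false] at hab
    · exact π.injective hab
    · exact absurd (hab ▸ Finset.mem_image_of_mem π ha) (hρ_notmem b hb)
    · exact absurd (hab.symm ▸ Finset.mem_image_of_mem π hb) (hρ_notmem a ha)
    · exact hρinjc a ha b hb hab
  let τ : Equiv.Perm (Fin d) := Equiv.ofBijective _ (Finite.injective_iff_bijective.mp hfinj)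
  have hτ : ∀ j, τ j = if j ∈ S then π j else ρ j := fun j => rfl
  have htri : (X.submatrix id τ).BlockTriangular id := by
    intro a b hb
    simp only [id] at hb
    by_cases ha : a ∈ S
    · have hbS : b ∈ S := by
        have ha' : (a : ℕ) < i := by
          simpa only [hSdef, Finset.mem_filter, Finset.mem_univ, true_and] using ha
        have : (b : ℕ) < (a : ℕ) := hb
        simp only [hSdef, Finset.mem_filter, Finset.mem_univ, true_and]
        omega
      have hXa : X a = A a := by
        simp only [X, if_pos ha, hρS a ha]
      show X a (τ b) = 0
      rw [hXa, hτ b, if_pos hbS]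
      exact h3 b a hb
    · show X a (τ b) = 0
      have hXa : X a = (1 : Matrix (Fin d) (Fin d) ℚ_[p]) (ρ a) := by
        simp only [X, if_neg ha]
      have hτa : τ a = ρ a := by rw [hτ a, if_neg ha]
      rw [hXa, Matrix.one_apply, if_neg]
      intro hc
      have : τ a = τ b := by rw [hτa, hc]
      exact absurd (τ.injective this) (ne_of_gt hb)
  have hdiag : (X.submatrix id τ).det = ∏ j ∈ S, A j (π j) := by
    rw [Matrix.det_of_upperTriangular htri]
    have hdd : ∀ j : Fin d, (X.submatrix id τ) j j = if j ∈ S then A j (π j) else 1 := by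
      intro j
      show X j (τ j) = _
      by_cases hj : j ∈ S
      · rw [hτ j, if_pos hj, if_pos hj]
        simp only [X, if_pos hj, hρS j hj]
      · rw [hτ j, if_neg hj, if_neg hj]
        simp only [X, if_neg hj]
        rw [Matrix.one_apply, if_pos rfl]
    rw [Finset.prod_congr rfl (fun j _ => hdd j), Finset.prod_ite_mem, Finset.univ_inter]
  have hprodne : (∏ j ∈ S, A j (π j)) ≠ 0 :=
    Finset.prod_ne_zero_iff.mpr fun j _ => hpiv j
  have hdetperm : (X.submatrix id τ).det = (Equiv.Perm.sign τ : ℤ) * X.det :=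
    Matrix.det_permute' τ X
  have hXdet : X.det ≠ 0 := by
    intro h0
    rw [hdiag] at hdetperm
    rw [h0, mul_zero] at hdetperm
    exact hprodne hdetperm
  have hnormdet : ‖X.det‖ = (p : ℝ) ^ (-B) := by
    have h1n : ‖(X.submatrix id τ).det‖ = ‖X.det‖ := by
      rw [hdetperm, norm_mul]
      rcases Int.units_eq_one_or (Equiv.Perm.sign τ) with h | h <;> simp [h]
    rw [← h1n, hdiag, norm_prod]
    calc ∏ j ∈ S, ‖A j (π j)‖ = ∏ j ∈ S, (p : ℝ) ^ (-(α j)) :=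
          Finset.prod_congr rfl fun j _ => hpivnorm j
      _ = (p : ℝ) ^ (∑ j ∈ S, -(α j)) := prod_zpow_sum (ne_of_gt hp0) _ _
      _ = (p : ℝ) ^ (-B) := by rw [Finset.sum_neg_distrib, hB]
  have hvaldet : X.det.valuation = B := padic_valuation_eq_of_norm hXdet hnormdet
  have hmem : B ∈ {v : ℤ | ∃ X : Matrix (Fin d) (Fin d) ℚ_[p],
      IsCandidate p d i A 1 X ∧ X.det ≠ 0 ∧ v = X.det.valuation} := by
    refine ⟨X, ⟨S, ρ, hScard, ?_, ?_, fun j => rfl⟩, hXdet, hvaldet.symm⟩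
    · intro a ha b hb hab
      rwa [hρS a (Finset.mem_coe.mp ha), hρS b (Finset.mem_coe.mp hb)] at hab
    · intro a ha b hb hab
      exact hρinjc a (Finset.mem_compl.mp (Finset.mem_coe.mp ha))
        b (Finset.mem_compl.mp (Finset.mem_coe.mp hb)) hab
  show mVal p d i A 1 = B
  rw [mVal]
  exact le_antisymm (csInf_le ⟨B, lower⟩ hmem) (le_csInf ⟨B, hmem⟩ lower)

end BT
end

section
/- Let A, B ∈ GL_d(ℚ_p) be invertible diagonal matrices, and set α_i = ν(A_{i,i}) and β_i = ν(B_{i,i}) for i = 1,…,d. Then m_{B:0,A:d} − m_{B:1,A:d−1} = max_{1≤i≤d}(α_i − β_i) and m_{B:d,A:0} − m_{B:d−1,A:1} = max_{1≤i≤d}(β_i − α_i). Consequently m_{A:d,B:0} + m_{A:0,B:d} − m_{A:d−1,B:1} − m_{A:1,B:d−1} = max_{1≤i≤d}(α_i − β_i) + max_{1≤i≤d}(β_i − α_i). -/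
open Pointwise

namespace BT

variable (p : ℕ) [Fact p.Prime] (d : ℕ)

/-- Maximum of `f` over `Fin d` (with `d > 0`). -/
noncomputable def maxOver (d : ℕ) (hd : 0 < d) (f : Fin d → ℤ) : ℤ :=
  Finset.univ.sup' (Finset.univ_nonempty_iff.mpr ⟨⟨0, hd⟩⟩) f

private lemma padic_val_prod {ι : Type*} (s : Finset ι) (g : ι → ℚ_[p])
    (h : ∀ j ∈ s, g j ≠ 0) :
    (∏ j ∈ s, g j).valuation = ∑ j ∈ s, (g j).valuation := by
  classical
  induction s using Finset.induction_on with
  | empty => simp [Padic.valuation_one]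
  | @insert a s hj ih =>
    rw [Finset.prod_insert hj, Finset.sum_insert hj,
      Padic.valuation_mul (h a (Finset.mem_insert_self a s))
        (Finset.prod_ne_zero_iff.mpr fun j hjs => h j (Finset.mem_insert_of_mem hjs)),
      ih fun j hjs => h j (Finset.mem_insert_of_mem hjs)]

private lemma padic_val_neg (x : ℚ_[p]) (hx : x ≠ 0) : (-x).valuation = x.valuation := by
  have h := Padic.valuation_mul (p := p) (x := (-1 : ℚ_[p])) (y := (-1 : ℚ_[p]))
    (by norm_num) (by norm_num)
  rw [neg_mul_neg, one_mul, Padic.valuation_one] at h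
  rw [show -x = -1 * x by ring, Padic.valuation_mul (by norm_num : (-1 : ℚ_[p]) ≠ 0) hx]
  omega

private lemma mem_cand_set (i : ℕ) (A B : Matrix (Fin d) (Fin d) ℚ_[p])
    (hAdiag : A.IsDiag) (hBdiag : B.IsDiag)
    (ha : ∀ j, A j j ≠ 0) (hb : ∀ j, B j j ≠ 0)
    (T : Finset (Fin d)) (hT : T.card = i) :
    (∑ j, if j ∈ T then (A j j).valuation else (B j j).valuation) ∈
      {v : ℤ | ∃ X : Matrix (Fin d) (Fin d) ℚ_[p],
        IsCandidate p d i A B X ∧ X.det ≠ 0 ∧ v = X.det.valuation} := by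
  classical
  set c : Fin d → ℚ_[p] := fun j => if j ∈ T then A j j else B j j with hc
  have hc0 : ∀ j, c j ≠ 0 := fun j => by
    by_cases hj : j ∈ T <;> simp [c, hj, ha, hb]
  refine ⟨Matrix.diagonal c, ⟨T, id, hT, Set.injOn_id _, Set.injOn_id _, fun j => ?_⟩, ?_, ?_⟩
  · funext k
    by_cases hj : j ∈ T <;> by_cases hjk : j = k
    · subst hjk; simp [Matrix.diagonal_apply_eq, c, hj]
    · simp [Matrix.diagonal_apply_ne _ hjk, c, hj, hAdiag hjk]
    · subst hjk; simp [Matrix.diagonal_apply_eq, c, hj]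
    · simp [Matrix.diagonal_apply_ne _ hjk, c, hj, hBdiag hjk]
  · rw [Matrix.det_diagonal]
    exact Finset.prod_ne_zero_iff.mpr fun j _ => hc0 j
  · rw [Matrix.det_diagonal, padic_val_prod p _ _ fun j _ => hc0 j]
    refine Finset.sum_congr rfl fun j _ => ?_
    by_cases hj : j ∈ T <;> simp [c, hj]

private lemma cand_set_sub (i : ℕ) (A B : Matrix (Fin d) (Fin d) ℚ_[p])
    (hAdiag : A.IsDiag) (hBdiag : B.IsDiag)
    (ha : ∀ j, A j j ≠ 0) (hb : ∀ j, B j j ≠ 0) :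
    ∀ v ∈ {v : ℤ | ∃ X : Matrix (Fin d) (Fin d) ℚ_[p],
        IsCandidate p d i A B X ∧ X.det ≠ 0 ∧ v = X.det.valuation},
      ∃ T : Finset (Fin d), T.card = i ∧
        v = ∑ j, if j ∈ T then (A j j).valuation else (B j j).valuation := by
  classical
  rintro v ⟨X, ⟨S, ρ, hS, hinjS, hinjSc, hX⟩, hdet, rfl⟩
  set c : Fin d → ℚ_[p] := fun j => if j ∈ S then A (ρ j) (ρ j) else B (ρ j) (ρ j) with hcdef
  set M : Matrix (Fin d) (Fin d) ℚ_[p] :=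
    Matrix.of fun j k => if ρ j = k then 1 else 0 with hMdef
  have hc0 : ∀ j, c j ≠ 0 := fun j => by
    by_cases hj : j ∈ S <;> simp [c, hj, ha, hb]
  have hXM : X = Matrix.diagonal c * M := by
    funext j k
    rw [Matrix.diagonal_mul, hX j]
    by_cases hj : j ∈ S <;> by_cases hk : ρ j = k
    · subst hk; simp [c, M, hj]
    · simp [c, M, hj, hk, hAdiag hk]
    · subst hk; simp [c, M, hj]
    · simp [c, M, hj, hk, hBdiag hk]
  have hdetM : M.det ≠ 0 := by
    intro h
    apply hdet
    rw [hXM, Matrix.det_mul, h, mul_zero]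
  have hρinj : Function.Injective ρ := by
    intro j1 j2 h12
    have hrow : M j1 = M j2 := funext fun k => by simp [M, h12]
    by_cases h1 : j1 ∈ S <;> by_cases h2 : j2 ∈ S
    · exact hinjS h1 h2 h12
    · by_contra hne
      exact hdetM (Matrix.det_zero_of_row_eq hne hrow)
    · by_contra hne
      exact hdetM (Matrix.det_zero_of_row_eq hne hrow)
    · exact hinjSc (by simp [h1]) (by simp [h2]) h12
  have hbij : Function.Bijective ρ := Finite.injective_iff_bijective.mp hρinj
  set σ : Equiv.Perm (Fin d) := Equiv.ofBijective ρ hbij with hσ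
  have hM : M = σ.permMatrix ℚ_[p] := by
    funext j k
    simp only [M, Matrix.of_apply, Equiv.Perm.permMatrix, PEquiv.toMatrix_apply,
      Equiv.toPEquiv_apply, Option.mem_def, Option.some.injEq]
    have hσj : σ j = ρ j := rfl
    rw [hσj]
  have hdetX : X.det = (∏ j, c j) * ((Equiv.Perm.sign σ : ℤ) : ℚ_[p]) := by
    rw [hXM, Matrix.det_mul, Matrix.det_diagonal, hM, Matrix.det_permutation]
  have hprod0 : (∏ j, c j) ≠ 0 := Finset.prod_ne_zero_iff.mpr fun j _ => hc0 j
  have hval : X.det.valuation = ∑ j, (c j).valuation := by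
    rcases Int.units_eq_one_or (Equiv.Perm.sign σ) with hs | hs <;> rw [hdetX, hs]
    · simpa using padic_val_prod p _ _ fun j _ => hc0 j
    · have : (∏ j, c j) * (((-1 : ℤˣ) : ℤ) : ℚ_[p]) = -(∏ j, c j) := by
        push_cast; ring
      rw [this, padic_val_neg p _ hprod0]
      exact padic_val_prod p _ _ fun j _ => hc0 j
  refine ⟨S.image ρ, by rw [Finset.card_image_of_injective _ hρinj, hS], ?_⟩
  rw [hval]
  have hmem : ∀ j, j ∈ S ↔ ρ j ∈ S.image ρ := fun j =>
    ⟨fun h => Finset.mem_image_of_mem _ h, fun h => by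
      obtain ⟨j', hj', hjj⟩ := Finset.mem_image.mp h
      rwa [hρinj hjj] at hj'⟩
  calc ∑ j, (c j).valuation
      = ∑ j, (if ρ j ∈ S.image ρ then (A (ρ j) (ρ j)).valuation
          else (B (ρ j) (ρ j)).valuation) := by
        refine Finset.sum_congr rfl fun j _ => ?_
        by_cases hj : j ∈ S
        · rw [show c j = A (ρ j) (ρ j) from if_pos hj, if_pos ((hmem j).mp hj)]
        · rw [show c j = B (ρ j) (ρ j) from if_neg hj, if_neg (fun h => hj ((hmem j).mpr h))]
    _ = ∑ k, (if k ∈ S.image ρ then (A k k).valuation else (B k k).valuation) :=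
        Fintype.sum_bijective ρ hbij _ _ fun j => rfl

private lemma mVal_le_s14 (i : ℕ) (A B : Matrix (Fin d) (Fin d) ℚ_[p])
    (hAdiag : A.IsDiag) (hBdiag : B.IsDiag)
    (ha : ∀ j, A j j ≠ 0) (hb : ∀ j, B j j ≠ 0)
    (T : Finset (Fin d)) (hT : T.card = i) :
    mVal p d i A B ≤ ∑ j, if j ∈ T then (A j j).valuation else (B j j).valuation := by
  refine csInf_le ⟨∑ j, min (A j j).valuation (B j j).valuation, fun v hv => ?_⟩
    (mem_cand_set p d i A B hAdiag hBdiag ha hb T hT)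
  obtain ⟨T', -, rfl⟩ := cand_set_sub p d i A B hAdiag hBdiag ha hb v hv
  refine Finset.sum_le_sum fun j _ => ?_
  by_cases hj : j ∈ T' <;> simp [hj, min_le_left, min_le_right]

private lemma mVal_mem (i : ℕ) (hi : i ≤ d) (A B : Matrix (Fin d) (Fin d) ℚ_[p])
    (hAdiag : A.IsDiag) (hBdiag : B.IsDiag)
    (ha : ∀ j, A j j ≠ 0) (hb : ∀ j, B j j ≠ 0) :
    ∃ T : Finset (Fin d), T.card = i ∧
      mVal p d i A B = ∑ j, if j ∈ T then (A j j).valuation else (B j j).valuation := by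
  classical
  obtain ⟨T0, -, hT0⟩ := Finset.exists_subset_card_eq (s := (Finset.univ : Finset (Fin d))) (n := i)
    (by simpa using hi)
  have hne : {v : ℤ | ∃ X : Matrix (Fin d) (Fin d) ℚ_[p],
      IsCandidate p d i A B X ∧ X.det ≠ 0 ∧ v = X.det.valuation}.Nonempty :=
    ⟨_, mem_cand_set p d i A B hAdiag hBdiag ha hb T0 hT0⟩
  have hbdd : BddBelow {v : ℤ | ∃ X : Matrix (Fin d) (Fin d) ℚ_[p],
      IsCandidate p d i A B X ∧ X.det ≠ 0 ∧ v = X.det.valuation} := by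
    refine ⟨∑ j, min (A j j).valuation (B j j).valuation, fun v hv => ?_⟩
    obtain ⟨T', -, rfl⟩ := cand_set_sub p d i A B hAdiag hBdiag ha hb v hv
    refine Finset.sum_le_sum fun j _ => ?_
    by_cases hj : j ∈ T' <;> simp [hj, min_le_left, min_le_right]
  exact cand_set_sub p d i A B hAdiag hBdiag ha hb _ (Int.csInf_mem hne hbdd)

/-- **Distance on an apartment (diagonal representatives).** For invertible
diagonal `A, B` with `α_i = ν(A_{i,i})`, `β_i = ν(B_{i,i})`:
`m_{B:0,A:d} − m_{B:1,A:d−1} = max_i (α_i − β_i)`,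
`m_{B:d,A:0} − m_{B:d−1,A:1} = max_i (β_i − α_i)`, and consequently
`m_{A:d,B:0} + m_{A:0,B:d} − m_{A:d−1,B:1} − m_{A:1,B:d−1}
  = max_i (α_i − β_i) + max_i (β_i − α_i)`. -/
theorem mVal_diagonal (hd : 2 ≤ d) (A B : Matrix (Fin d) (Fin d) ℚ_[p])
    (hAdiag : A.IsDiag) (hBdiag : B.IsDiag) (hA : A.det ≠ 0) (hB : B.det ≠ 0) :
    mVal p d d A B - mVal p d (d - 1) A B =
      maxOver d (by omega) (fun i => (A i i).valuation - (B i i).valuation) ∧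
    mVal p d 0 A B - mVal p d 1 A B =
      maxOver d (by omega) (fun i => (B i i).valuation - (A i i).valuation) ∧
    mVal p d d A B + mVal p d 0 A B - mVal p d (d - 1) A B - mVal p d 1 A B =
      maxOver d (by omega) (fun i => (A i i).valuation - (B i i).valuation) +
        maxOver d (by omega) (fun i => (B i i).valuation - (A i i).valuation) := by
  classical
  have hd' : 0 < d := by omega
  have hAdg : A = Matrix.diagonal (fun j => A j j) := by
    funext i j
    by_cases h : i = j
    · subst h; simp
    · simp [Matrix.diagonal_apply_ne _ h, hAdiag h]
  have hBdg : B = Matrix.diagonal (fun j => B j j) := by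
    funext i j
    by_cases h : i = j
    · subst h; simp
    · simp [Matrix.diagonal_apply_ne _ h, hBdiag h]
  have ha : ∀ j, A j j ≠ 0 := by
    intro j
    have h := hA
    rw [hAdg, Matrix.det_diagonal] at h
    exact Finset.prod_ne_zero_iff.mp h j (Finset.mem_univ j)
  have hb : ∀ j, B j j ≠ 0 := by
    intro j
    have h := hB
    rw [hBdg, Matrix.det_diagonal] at h
    exact Finset.prod_ne_zero_iff.mp h j (Finset.mem_univ j)
  have hne : (Finset.univ : Finset (Fin d)).Nonempty := ⟨⟨0, hd'⟩, Finset.mem_univ _⟩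
  have hfk : ∀ k : Fin d,
      (∑ j, if j ∈ ({k} : Finset (Fin d)) then (A j j).valuation else (B j j).valuation)
        = (∑ j, (B j j).valuation) + ((A k k).valuation - (B k k).valuation) := by
    intro k
    have hj : ∀ j : Fin d,
        (if j ∈ ({k} : Finset (Fin d)) then (A j j).valuation else (B j j).valuation)
          = (B j j).valuation + (if j = k then (A j j).valuation - (B j j).valuation else 0) := by
      intro j
      by_cases h : j = k
      · subst h; simp
      · simp [h]
    rw [Finset.sum_congr rfl fun j _ => hj j, Finset.sum_add_distrib]
    simp
  have hfkc : ∀ k : Fin d,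
      (∑ j, if j ∈ ({k}ᶜ : Finset (Fin d)) then (A j j).valuation else (B j j).valuation)
        = (∑ j, (A j j).valuation) + ((B k k).valuation - (A k k).valuation) := by
    intro k
    have hj : ∀ j : Fin d,
        (if j ∈ ({k}ᶜ : Finset (Fin d)) then (A j j).valuation else (B j j).valuation)
          = (A j j).valuation + (if j = k then (B j j).valuation - (A j j).valuation else 0) := by
      intro j
      by_cases h : j = k
      · subst h; simp
      · simp [h]
    rw [Finset.sum_congr rfl fun j _ => hj j, Finset.sum_add_distrib]
    simp
  have h_d : mVal p d d A B = ∑ j, (A j j).valuation := by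
    obtain ⟨T, hT, hval⟩ := mVal_mem p d d le_rfl A B hAdiag hBdiag ha hb
    have hTu : T = Finset.univ := (Finset.card_eq_iff_eq_univ T).mp (by rw [Fintype.card_fin]; exact hT)
    subst hTu
    simpa using hval
  have h_0 : mVal p d 0 A B = ∑ j, (B j j).valuation := by
    obtain ⟨T, hT, hval⟩ := mVal_mem p d 0 (by omega) A B hAdiag hBdiag ha hb
    rw [Finset.card_eq_zero] at hT
    subst hT
    simpa using hval
  have h_1 : mVal p d 1 A B =
      (∑ j, (B j j).valuation) -
        maxOver d hd' (fun i => (B i i).valuation - (A i i).valuation) := by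
    refine le_antisymm ?_ ?_
    · obtain ⟨k, -, hk⟩ := Finset.exists_mem_eq_sup' hne
        (fun i => (B i i).valuation - (A i i).valuation)
      have h := mVal_le_s14 p d 1 A B hAdiag hBdiag ha hb {k} (Finset.card_singleton k)
      rw [hfk k] at h
      have hm : maxOver d hd' (fun i => (B i i).valuation - (A i i).valuation)
          = (B k k).valuation - (A k k).valuation := by rw [maxOver]; exact hk
      linarith
    · obtain ⟨T, hT, hval⟩ := mVal_mem p d 1 (by omega) A B hAdiag hBdiag ha hb
      obtain ⟨k, rfl⟩ := Finset.card_eq_one.mp hT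
      rw [hval, hfk k]
      have hm : (B k k).valuation - (A k k).valuation ≤
          maxOver d hd' (fun i => (B i i).valuation - (A i i).valuation) := by
        rw [maxOver]
        exact Finset.le_sup' (fun i => (B i i).valuation - (A i i).valuation)
          (Finset.mem_univ k)
      linarith
  have h_dm : mVal p d (d - 1) A B =
      (∑ j, (A j j).valuation) -
        maxOver d hd' (fun i => (A i i).valuation - (B i i).valuation) := by
    refine le_antisymm ?_ ?_
    · obtain ⟨k, -, hk⟩ := Finset.exists_mem_eq_sup' hne
        (fun i => (A i i).valuation - (B i i).valuation)
      have hcard : ({k}ᶜ : Finset (Fin d)).card = d - 1 := by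
        rw [Finset.card_compl, Finset.card_singleton, Fintype.card_fin]
      have h := mVal_le_s14 p d (d - 1) A B hAdiag hBdiag ha hb {k}ᶜ hcard
      rw [hfkc k] at h
      have hm : maxOver d hd' (fun i => (A i i).valuation - (B i i).valuation)
          = (A k k).valuation - (B k k).valuation := by rw [maxOver]; exact hk
      linarith
    · obtain ⟨T, hT, hval⟩ := mVal_mem p d (d - 1) (by omega) A B hAdiag hBdiag ha hb
      have hTc : Tᶜ.card = 1 := by
        rw [Finset.card_compl, hT, Fintype.card_fin]; omega
      obtain ⟨k, hk⟩ := Finset.card_eq_one.mp hTc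
      have hTeq : T = ({k} : Finset (Fin d))ᶜ := by rw [← hk, compl_compl]
      rw [hval, hTeq, hfkc k]
      have hm : (A k k).valuation - (B k k).valuation ≤
          maxOver d hd' (fun i => (A i i).valuation - (B i i).valuation) := by
        rw [maxOver]
        exact Finset.le_sup' (fun i => (A i i).valuation - (B i i).valuation)
          (Finset.mem_univ k)
      linarith
  refine ⟨by linarith, by linarith, by linarith⟩

end BT
end
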